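/- arXiv:2504.07639 — 10 statements merged into one kernel-verified Lean document; each statement's English description precedes it below -/
import Mathlib

section
/- Let F be a field, let n, r be natural numbers, let b : Fin n → ℕ be a block-index function, and let X be an n×n matrix over F that is block diagonal with respect to b (i.e. X i j = 0 whenever b i ≠ b j). Then the following are equivalent: (i) every n×n matrix Y over F satisfying X*Y = Y*X is block diagonal with respect to b; (ii) for every strictly upper-block matrix V (i.e. V i j = 0 unless b i < b j) there exists a unique strictly upper-block matrix N with X*N − N*X = V, and for every strictly lower-block matrix V (i.e. V i j = 0 unless b j < b i) there exists a unique strictly lower-block matrix N with X*N − N*X = V. -/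
private lemma pres_blk {F : Type*} [Field F] {n : ℕ} {b : Fin n → ℕ}
    {X : Matrix (Fin n) (Fin n) F} (hX : ∀ i j, b i ≠ b j → X i j = 0)
    (R : ℕ → ℕ → Prop) {N : Matrix (Fin n) (Fin n) F}
    (hN : ∀ i j, ¬ R (b i) (b j) → N i j = 0) :
    ∀ i j, ¬ R (b i) (b j) → (X * N - N * X) i j = 0 := by
  intro i j hij
  simp only [Matrix.sub_apply, Matrix.mul_apply]
  have h1 : ∀ k ∈ Finset.univ, X i k * N k j = 0 := by
    intro k _
    by_cases h : b i = b k
    · rw [hN k j (by rw [← h]; exact hij), mul_zero]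
    · rw [hX i k h, zero_mul]
  have h2 : ∀ k ∈ (Finset.univ : Finset (Fin n)), N i k * X k j = 0 := by
    intro k _
    by_cases h : b k = b j
    · rw [hN i k (by rw [h]; exact hij), zero_mul]
    · rw [hX k j h, mul_zero]
  rw [Finset.sum_eq_zero h1, Finset.sum_eq_zero h2, sub_zero]

private def blkSub (F : Type*) [Field F] (n : ℕ) (b : Fin n → ℕ) (R : ℕ → ℕ → Prop) :
    Submodule F (Matrix (Fin n) (Fin n) F) where
  carrier := {N | ∀ i j, ¬ R (b i) (b j) → N i j = 0}
  add_mem' := by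
    intro A B hA hB i j h
    simp [Matrix.add_apply, hA i j h, hB i j h]
  zero_mem' := fun i j _ => rfl
  smul_mem' := by
    intro c N hN i j h
    simp [Matrix.smul_apply, hN i j h]

private lemma key_surj {F : Type*} [Field F] {n : ℕ} {b : Fin n → ℕ}
    {X : Matrix (Fin n) (Fin n) F} (hX : ∀ i j, b i ≠ b j → X i j = 0)
    (R : ℕ → ℕ → Prop) (hirr : ∀ x y, R x y → x ≠ y)
    (hY : ∀ Y : Matrix (Fin n) (Fin n) F, X * Y = Y * X →
      ∀ i j, b i ≠ b j → Y i j = 0) :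
    ∀ V : Matrix (Fin n) (Fin n) F, (∀ i j, ¬ R (b i) (b j) → V i j = 0) →
      ∃! N : Matrix (Fin n) (Fin n) F,
        (∀ i j, ¬ R (b i) (b j) → N i j = 0) ∧ X * N - N * X = V := by
  intro V hV
  set S := blkSub F n b R with hS
  let ad : Matrix (Fin n) (Fin n) F →ₗ[F] Matrix (Fin n) (Fin n) F :=
    LinearMap.mulLeft F X - LinearMap.mulRight F X
  have had : ∀ M : Matrix (Fin n) (Fin n) F, ad M = X * M - M * X := by
    intro M
    simp [ad, LinearMap.sub_apply]
  have hmap : ∀ M ∈ S, ad M ∈ S := by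
    intro M hM i j h
    rw [had]
    exact pres_blk hX R hM i j h
  let L : S →ₗ[F] S := ad.restrict hmap
  have hinj : Function.Injective L := by
    rw [← LinearMap.ker_eq_bot, LinearMap.ker_eq_bot']
    intro M hM0
    have h0 : X * M.1 - M.1 * X = 0 := by
      have := congrArg Subtype.val hM0
      simpa [L, LinearMap.restrict_apply, had] using this
    have hcomm : X * M.1 = M.1 * X := by
      rwa [sub_eq_zero] at h0
    have hbd := hY M.1 hcomm
    apply Subtype.ext
    funext i j
    by_cases h : b i = b j
    · exact M.2 i j (fun hr => hirr _ _ hr h)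
    · exact hbd i j h
  have hsurj : Function.Surjective L :=
    (LinearMap.injective_iff_surjective).mp hinj
  obtain ⟨N, hN⟩ := hsurj ⟨V, hV⟩
  refine ⟨N.1, ⟨N.2, ?_⟩, ?_⟩
  · have := congrArg Subtype.val hN
    simpa [L, LinearMap.restrict_apply, had] using this
  · rintro M ⟨hM1, hM2⟩
    have : L ⟨M, hM1⟩ = L N := by
      apply Subtype.ext
      have h1 : (L ⟨M, hM1⟩ : Matrix (Fin n) (Fin n) F) = V := by
        simpa [L, LinearMap.restrict_apply, had] using hM2
      have h2 : (L N : Matrix (Fin n) (Fin n) F) = V := by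
        have := congrArg Subtype.val hN
        simpa [L, LinearMap.restrict_apply] using this
      rw [h1, h2]
    exact congrArg Subtype.val (hinj this)

/-- Matrix form of the equivalence (5) ⇔ (6): every matrix commuting with the
block-diagonal matrix `X` is block diagonal iff `ad X` is bijective on the
strictly upper-block and strictly lower-block matrices. -/
theorem stmt_0 (F : Type*) [Field F] (n r : ℕ) (b : Fin n → ℕ)
    (X : Matrix (Fin n) (Fin n) F)
    (hX : ∀ i j, b i ≠ b j → X i j = 0) :
    (∀ Y : Matrix (Fin n) (Fin n) F, X * Y = Y * X → ∀ i j, b i ≠ b j → Y i j = 0) ↔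
      ((∀ V : Matrix (Fin n) (Fin n) F, (∀ i j, ¬ b i < b j → V i j = 0) →
          ∃! N : Matrix (Fin n) (Fin n) F,
            (∀ i j, ¬ b i < b j → N i j = 0) ∧ X * N - N * X = V) ∧
        (∀ V : Matrix (Fin n) (Fin n) F, (∀ i j, ¬ b j < b i → V i j = 0) →
          ∃! N : Matrix (Fin n) (Fin n) F,
            (∀ i j, ¬ b j < b i → N i j = 0) ∧ X * N - N * X = V)) := by
  constructor
  · intro hY
    constructor
    · exact key_surj hX (fun x y => x < y) (fun x y h => Nat.ne_of_lt h) hY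
    · exact key_surj hX (fun x y => y < x) (fun x y h => (Nat.ne_of_lt h).symm) hY
  · rintro ⟨hU, hL⟩ Y hcomm i j hij
    -- decompose Y
    set Yd : Matrix (Fin n) (Fin n) F := Matrix.of fun i j => if b i = b j then Y i j else 0
      with hYd
    set Yu : Matrix (Fin n) (Fin n) F := Matrix.of fun i j => if b i < b j then Y i j else 0
      with hYu
    set Yl : Matrix (Fin n) (Fin n) F := Matrix.of fun i j => if b j < b i then Y i j else 0
      with hYl
    have hdec : Y = Yd + Yu + Yl := by
      funext p q
      simp only [Matrix.add_apply, hYd, hYu, hYl, Matrix.of_apply]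
      rcases lt_trichotomy (b p) (b q) with h | h | h
      · simp [h, Nat.ne_of_lt h, Nat.lt_asymm h]
      · simp [h, lt_irrefl]
      · simp [h, (Nat.ne_of_lt h).symm, Nat.lt_asymm h]
    have hYd_mem : ∀ p q, ¬ b p = b q → Yd p q = 0 := by
      intro p q h; simp [hYd, h]
    have hYu_mem : ∀ p q, ¬ b p < b q → Yu p q = 0 := by
      intro p q h; simp [hYu, h]
    have hYl_mem : ∀ p q, ¬ b q < b p → Yl p q = 0 := by
      intro p q h; simp [hYl, h]
    have hzero : X * Y - Y * X = 0 := by rw [hcomm, sub_self]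
    have hsum : (X * Yd - Yd * X) + (X * Yu - Yu * X) + (X * Yl - Yl * X) = 0 := by
      have : (X * Yd - Yd * X) + (X * Yu - Yu * X) + (X * Yl - Yl * X)
          = X * (Yd + Yu + Yl) - (Yd + Yu + Yl) * X := by noncomm_ring
      rw [this, ← hdec, hzero]
    -- entrywise, each piece of ad X vanishes
    have hadu : X * Yu - Yu * X = 0 := by
      funext p q
      by_cases h : b p < b q
      · have h1 : (X * Yd - Yd * X) p q = 0 :=
          pres_blk hX (fun x y => x = y) hYd_mem p q (Nat.ne_of_lt h)
        have h2 : (X * Yl - Yl * X) p q = 0 :=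
          pres_blk hX (fun x y => y < x) hYl_mem p q (Nat.lt_asymm h)
        have := congrFun (congrFun hsum p) q
        simp only [Matrix.add_apply, Matrix.zero_apply, h1, h2] at this
        simpa using this
      · exact pres_blk hX (fun x y => x < y) hYu_mem p q h
    have hadl : X * Yl - Yl * X = 0 := by
      funext p q
      by_cases h : b q < b p
      · have h1 : (X * Yd - Yd * X) p q = 0 :=
          pres_blk hX (fun x y => x = y) hYd_mem p q ((Nat.ne_of_lt h).symm)
        have h2 : (X * Yu - Yu * X) p q = 0 :=
          pres_blk hX (fun x y => x < y) hYu_mem p q (Nat.lt_asymm h)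
        have := congrFun (congrFun hsum p) q
        simp only [Matrix.add_apply, Matrix.zero_apply, h1, h2] at this
        simpa using this
      · exact pres_blk hX (fun x y => y < x) hYl_mem p q h
    -- uniqueness kills Yu and Yl
    have hU0 := hU 0 (fun _ _ _ => rfl)
    have hYu0 : Yu = 0 :=
      hU0.unique ⟨hYu_mem, hadu⟩ ⟨fun _ _ _ => rfl, by simp⟩
    have hL0 := hL 0 (fun _ _ _ => rfl)
    have hYl0 : Yl = 0 :=
      hL0.unique ⟨hYl_mem, hadl⟩ ⟨fun _ _ _ => rfl, by simp⟩
    have := congrFun (congrFun hdec i) j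
    rw [hYu0, hYl0] at this
    simpa [hYd_mem i j hij] using this
end

section
/- Let F be a field of characteristic 0, let n be a natural number, let b : Fin n → ℕ be a block-index function, and let S, N be n×n matrices over F that are both block diagonal with respect to b, such that the minimal polynomial of S over F is squarefree, N is nilpotent, and S*N = N*S. Set X = S + N. Then every n×n matrix over F commuting with X is block diagonal with respect to b if and only if every n×n matrix over F commuting with S is block diagonal with respect to b. -/
open Module LinearMap

/-- Auxiliary downward induction: a purely off-block-diagonal matrix commuting
with `S` that is killed by a power of `ad N` must vanish, given that the
centralizer of `S + N` is block diagonal. -/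
private lemma aux_offdiag {F : Type*} [Field F] {n : ℕ} {b : Fin n → ℕ}
    {S N : Matrix (Fin n) (Fin n) F}
    (hN : ∀ i j, b i ≠ b j → N i j = 0)
    (hcomm : S * N = N * S)
    (hX : ∀ Y : Matrix (Fin n) (Fin n) F, (S + N) * Y = Y * (S + N) →
        ∀ i j, b i ≠ b j → Y i j = 0) :
    ∀ m : ℕ, ∀ Z : Matrix (Fin n) (Fin n) F, S * Z = Z * S →
      (∀ i j, b i = b j → Z i j = 0) →
      ((LinearMap.mulLeft F N - LinearMap.mulRight F N) ^ m) Z = 0 → Z = 0 := by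
  intro m
  induction m with
  | zero => intro Z _ _ h0; simpa using h0
  | succ m ih =>
    intro Z hZS hZoff hpow
    set W : Matrix (Fin n) (Fin n) F := N * Z - Z * N with hW
    have hDW : (LinearMap.mulLeft F N - LinearMap.mulRight F N) Z = W := by
      simp [hW, LinearMap.sub_apply]
    have hWS : S * W = W * S := by
      have h1 : S * (N * Z) = (N * Z) * S := by
        calc S * (N * Z) = (S * N) * Z := by rw [mul_assoc]
        _ = (N * S) * Z := by rw [hcomm]
        _ = N * (S * Z) := by rw [mul_assoc]
        _ = N * (Z * S) := by rw [hZS]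
        _ = (N * Z) * S := by rw [mul_assoc]
      have h2 : S * (Z * N) = (Z * N) * S := by
        calc S * (Z * N) = (S * Z) * N := by rw [mul_assoc]
        _ = (Z * S) * N := by rw [hZS]
        _ = Z * (S * N) := by rw [mul_assoc]
        _ = Z * (N * S) := by rw [hcomm]
        _ = (Z * N) * S := by rw [mul_assoc]
      simp only [hW, sub_mul, mul_sub, h1, h2]
    have hWoff : ∀ i j, b i = b j → W i j = 0 := by
      intro i j hij
      have h1 : (N * Z) i j = 0 := by
        rw [Matrix.mul_apply]
        refine Finset.sum_eq_zero fun k _ => ?_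
        by_cases hk : b i = b k
        · rw [hZoff k j (hk ▸ hij), mul_zero]
        · rw [hN i k hk, zero_mul]
      have h2 : (Z * N) i j = 0 := by
        rw [Matrix.mul_apply]
        refine Finset.sum_eq_zero fun k _ => ?_
        by_cases hk : b i = b k
        · rw [hZoff i k hk, zero_mul]
        · rw [hN k j fun h => hk (hij ▸ h.symm ▸ rfl), mul_zero]
      simp [hW, Matrix.sub_apply, h1, h2]
    have hWpow : ((LinearMap.mulLeft F N - LinearMap.mulRight F N) ^ m) W = 0 := by
      have := hpow
      rw [pow_succ, Module.End.mul_apply, hDW] at this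
      exact this
    have hW0 : W = 0 := ih W hWS hWoff hWpow
    have hZN : N * Z = Z * N := by
      have := sub_eq_zero.mp hW0
      simpa [hW] using this
    have hZX : (S + N) * Z = Z * (S + N) := by
      rw [add_mul, mul_add, hZS, hZN]
    funext i j
    by_cases hij : b i = b j
    · exact hZoff i j hij
    · exact hX Z hZX i j hij

/-- `S` lies in the subalgebra generated by `S + N` (uniqueness of the
Jordan-Chevalley decomposition). -/
private lemma semisimple_mem_adjoin {F : Type*} [Field F] [CharZero F] {n : ℕ}
    {S N : Matrix (Fin n) (Fin n) F}
    (hmin : Squarefree (minpoly F S))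
    (hnil : IsNilpotent N)
    (hcomm : S * N = N * S) :
    S ∈ Algebra.adjoin F {S + N} := by
  let e : Matrix (Fin n) (Fin n) F ≃ₐ[F] ((Fin n → F) →ₗ[F] (Fin n → F)) :=
    Matrix.toLinAlgEquiv'
  set f := e (S + N) with hf
  obtain ⟨n', hn'mem, s', hs'mem, hn'nil, hs'ss, hfeq⟩ :=
    Module.End.exists_isNilpotent_isSemisimple (f := f)
  -- e S is semisimple
  have hSss : Module.End.IsSemisimple (e S) := by
    refine Module.End.isSemisimple_of_squarefree_aeval_eq_zero hmin ?_
    rw [show e S = e.toAlgHom S from rfl, Polynomial.aeval_algHom_apply,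
      minpoly.aeval, map_zero]
  -- e S and e N commute with f
  have hScommX : Commute S (S + N) := by
    simp only [Commute, SemiconjBy, mul_add, add_mul, hcomm]
  have hNcommX : Commute N (S + N) := by
    simp only [Commute, SemiconjBy, mul_add, add_mul, hcomm]
  have hScommf : Commute (e S) f := by
    simpa [hf] using hScommX.map e.toAlgHom
  have hNcommf : Commute (e N) f := by
    simpa [hf] using hNcommX.map e.toAlgHom
  -- anything mem adjoin {f} commutes with e S and e N
  have hadjS : Algebra.adjoin F {f} ≤ Subalgebra.centralizer F {e S} := by
    refine Algebra.adjoin_le ?_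
    intro x hx
    rw [Set.mem_singleton_iff] at hx
    subst hx
    rw [SetLike.mem_coe, Subalgebra.mem_centralizer_iff]
    intro g hg
    rw [Set.mem_singleton_iff] at hg
    subst hg
    exact hScommf
  have hadjN : Algebra.adjoin F {f} ≤ Subalgebra.centralizer F {e N} := by
    refine Algebra.adjoin_le ?_
    intro x hx
    rw [Set.mem_singleton_iff] at hx
    subst hx
    rw [SetLike.mem_coe, Subalgebra.mem_centralizer_iff]
    intro g hg
    rw [Set.mem_singleton_iff] at hg
    subst hg
    exact hNcommf
  have hScomms' : Commute (e S) s' := by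
    have := hadjS hs'mem
    rw [Subalgebra.mem_centralizer_iff] at this
    exact this (e S) rfl
  have hNcommn' : Commute (e N) n' := by
    have := hadjN hn'mem
    rw [Subalgebra.mem_centralizer_iff] at this
    exact this (e N) rfl
  -- e S - s' is semisimple and nilpotent, hence zero
  have hdiff_ss : Module.End.IsSemisimple (e S - s') :=
    Module.End.IsSemisimple.sub_of_commute hScomms' hSss hs'ss
  have hkey : e S - s' = n' - e N := by
    have : e S + e N = n' + s' := by
      rw [← map_add]; rw [← hf]; exact hfeq
    linear_combination (norm := abel) this
  have hdiff_nil : IsNilpotent (e S - s') := by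
    rw [hkey]
    exact Commute.isNilpotent_sub hNcommn'.symm hn'nil
      (hnil.map e.toAlgHom)
  have hzero : e S - s' = 0 :=
    Module.End.eq_zero_of_isNilpotent_isSemisimple hdiff_nil hdiff_ss
  have hSs' : e S = s' := by rwa [sub_eq_zero] at hzero
  -- transfer membership back
  have hmap : Algebra.adjoin F {f} =
      (Algebra.adjoin F {S + N}).map e.toAlgHom := by
    rw [AlgHom.map_adjoin]
    simp [hf]
  rw [hmap] at hs'mem
  obtain ⟨x, hx, hex⟩ := hs'mem
  have hxS : x = S := e.injective (hex.trans hSs'.symm)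
  rwa [hxS] at hx

/-- Matrix form of the equivalence (4) ⇔ (5): for a Jordan decomposition
`X = S + N` inside the block-diagonal Levi algebra, the centralizer of `X`
is contained in the Levi iff the centralizer of the semisimple part `S` is. -/
theorem stmt_1 (F : Type*) [Field F] [CharZero F] (n : ℕ) (b : Fin n → ℕ)
    (S N : Matrix (Fin n) (Fin n) F)
    (hS : ∀ i j, b i ≠ b j → S i j = 0)
    (hN : ∀ i j, b i ≠ b j → N i j = 0)
    (hmin : Squarefree (minpoly F S))
    (hnil : IsNilpotent N)
    (hcomm : S * N = N * S) :
    (∀ Y : Matrix (Fin n) (Fin n) F, (S + N) * Y = Y * (S + N) →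
        ∀ i j, b i ≠ b j → Y i j = 0) ↔
      (∀ Y : Matrix (Fin n) (Fin n) F, S * Y = Y * S →
        ∀ i j, b i ≠ b j → Y i j = 0) := by
  constructor
  · -- centralizer of X block diagonal → centralizer of S block diagonal
    intro hX Y hY
    -- split off the block-diagonal part of Y
    set Z : Matrix (Fin n) (Fin n) F :=
      Matrix.of fun i j => if b i = b j then 0 else Y i j with hZ
    have hZoff : ∀ i j, b i = b j → Z i j = 0 := by
      intro i j hij; simp [hZ, hij]
    have hZS : S * Z = Z * S := by
      have hl : ∀ i j, (S * Z) i j = if b i = b j then 0 else (S * Y) i j := by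
        intro i j
        by_cases hij : b i = b j
        · simp only [hij, if_true]
          rw [Matrix.mul_apply]
          refine Finset.sum_eq_zero fun k _ => ?_
          by_cases hk : b i = b k
          · rw [hZoff k j (hk ▸ hij), mul_zero]
          · rw [hS i k hk, zero_mul]
        · simp only [hij, if_false]
          rw [Matrix.mul_apply, Matrix.mul_apply]
          refine Finset.sum_congr rfl fun k _ => ?_
          by_cases hk : b i = b k
          · have : ¬ b k = b j := fun h => hij (hk.trans h)
            simp [hZ, this]
          · rw [hS i k hk, zero_mul, zero_mul]
      have hr : ∀ i j, (Z * S) i j = if b i = b j then 0 else (Y * S) i j := by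
        intro i j
        by_cases hij : b i = b j
        · simp only [hij, if_true]
          rw [Matrix.mul_apply]
          refine Finset.sum_eq_zero fun k _ => ?_
          by_cases hk : b i = b k
          · rw [hZoff i k hk, zero_mul]
          · rw [hS k j (fun h => hk (hij.trans h.symm)), mul_zero]
        · simp only [hij, if_false]
          rw [Matrix.mul_apply, Matrix.mul_apply]
          refine Finset.sum_congr rfl fun k _ => ?_
          by_cases hk : b i = b k
          · rw [hS k j fun h => hij (hk.trans h)]
            simp
          · simp [hZ, hk]
      funext i j
      rw [hl i j, hr i j, hY]
    obtain ⟨k, hk⟩ : IsNilpotent (LinearMap.mulLeft F N - LinearMap.mulRight F N) :=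
      Commute.isNilpotent_sub (LinearMap.commute_mulLeft_right N N)
        ((LinearMap.isNilpotent_mulLeft_iff F N).mpr hnil)
        ((LinearMap.isNilpotent_mulRight_iff F N).mpr hnil)
    have hZ0 : Z = 0 := by
      refine aux_offdiag hN hcomm hX k Z hZS hZoff ?_
      rw [hk]; rfl
    intro i j hij
    have := congrFun (congrFun hZ0 i) j
    simpa [hZ, hij] using this
  · -- centralizer of S block diagonal → centralizer of X block diagonal
    intro hSc Y hY i j hij
    refine hSc Y ?_ i j hij
    -- S is a polynomial in S + N, and Y commutes with S + N
    have hmem : S ∈ Algebra.adjoin F {S + N} := semisimple_mem_adjoin hmin hnil hcomm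
    have hle : Algebra.adjoin F {S + N} ≤ Subalgebra.centralizer F {Y} := by
      refine Algebra.adjoin_le ?_
      intro x hx
      rw [Set.mem_singleton_iff] at hx
      subst hx
      rw [SetLike.mem_coe, Subalgebra.mem_centralizer_iff]
      intro g hg
      rw [Set.mem_singleton_iff] at hg
      subst hg
      exact hY.symm
    have := hle hmem
    rw [Subalgebra.mem_centralizer_iff] at this
    exact (this Y rfl).symm
end

section
/- Let F be a field, let n be a natural number, let b : Fin n → ℕ be a block-index function, and let X be an n×n matrix over F that is block diagonal with respect to b (X i j = 0 whenever b i ≠ b j). Assume that every n×n matrix over F commuting with X is block diagonal with respect to b. Then for every strictly upper-block matrix V (V i j = 0 unless b i < b j) there exists a unique strictly upper-block matrix N such that (1 + N) * X = (X + V) * (1 + N); in particular, since 1 + N is invertible, X + V is conjugate to X by the unipotent element 1 + N. -/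
/-!
The map `N ↦ N * X - (X + V) * N` preserves strictly upper-block matrices, and
`(1 + N) * X = (X + V) * (1 + N)` says exactly that it sends `N` to `V`. It is injective: if a
nonzero `N` solves the homogeneous equation, the rows of `N` at the highest level carrying a
nonzero entry form a matrix commuting with `X` (the rows of `V * N` there vanish), hence block
diagonal, hence zero since it is strictly upper-block. By finite dimension the map is bijective,
and `1 + N` is invertible since it is block upper triangular with identity diagonal blocks.
-/

namespace Matrix

variable {ι α R : Type*} [LinearOrder α]

/-- The paper's `𝔫_P`, the Lie algebra of the unipotent radical `N_P`. -/
def strictUpperBlock (R : Type*) [Semiring R] (b : ι → α) : Submodule R (Matrix ι ι R) where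
  carrier := {M | ∀ i j, ¬ b i < b j → M i j = 0}
  add_mem' hA hB i j hij := by simp [hA i j hij, hB i j hij]
  zero_mem' _ _ _ := rfl
  smul_mem' c _ hA i j hij := by simp [hA i j hij]

variable {b : ι → α}

theorem blockTriangular_of_mem_strictUpperBlock [Semiring R] {M : Matrix ι ι R}
    (hM : M ∈ strictUpperBlock R b) : M.BlockTriangular b :=
  fun i j hji => hM i j (lt_asymm hji)

theorem blockTriangular_of_blockDiagonal [Zero R] {X : Matrix ι ι R}
    (hX : ∀ i j, b i ≠ b j → X i j = 0) : X.BlockTriangular b :=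
  fun i j hji => hX i j hji.ne'

variable [Fintype ι]

theorem mul_apply_eq_zero_of_forall [NonUnitalNonAssocSemiring R] {A B : Matrix ι ι R}
    {i j : ι} (h : ∀ k, A i k = 0 ∨ B k j = 0) : (A * B) i j = 0 :=
  Finset.sum_eq_zero fun k _ => (h k).elim (fun hA => by simp [hA]) (fun hB => by simp [hB])

theorem BlockTriangular.mul_mem_strictUpperBlock [Semiring R] {A N : Matrix ι ι R}
    (hA : A.BlockTriangular b) (hN : N ∈ strictUpperBlock R b) :
    A * N ∈ strictUpperBlock R b := fun i j hij =>
  mul_apply_eq_zero_of_forall fun k =>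
    if hki : b k < b i then .inl (hA hki)
    else .inr (hN k j fun hkj => hij ((not_lt.1 hki).trans_lt hkj))

theorem mul_mem_strictUpperBlock_of_blockTriangular [Semiring R] {N A : Matrix ι ι R}
    (hN : N ∈ strictUpperBlock R b) (hA : A.BlockTriangular b) :
    N * A ∈ strictUpperBlock R b := fun i _ hij =>
  mul_apply_eq_zero_of_forall fun k =>
    if hik : b i < b k then .inr (hA (lt_of_not_ge fun hkj => hij (hik.trans_le hkj)))
    else .inl (hN i k hik)

theorem eq_zero_of_mul_eq_mul_of_mem_strictUpperBlock [Semiring R] {X V N : Matrix ι ι R}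
    (hX : ∀ i j, b i ≠ b j → X i j = 0)
    (hcent : ∀ Y : Matrix ι ι R, X * Y = Y * X → ∀ i j, b i ≠ b j → Y i j = 0)
    (hV : V ∈ strictUpperBlock R b) (hN : N ∈ strictUpperBlock R b)
    (h : N * X = (X + V) * N) : N = 0 := by
  classical
  by_contra hN0
  obtain ⟨i₀, j₀, hi₀⟩ : ∃ i j, N i j ≠ 0 := by
    by_contra! h0
    exact hN0 (ext h0)
  obtain ⟨i, hi, htop⟩ :=
    Finset.exists_max_image {i | ∃ j, N i j ≠ 0} b ⟨i₀, by simpa using ⟨j₀, hi₀⟩⟩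
  obtain ⟨j, hij⟩ : ∃ j, N i j ≠ 0 := by simpa using hi
  set p := b i
  have hN_above : ∀ k l, p < b k → N k l = 0 := fun k l hk => by
    by_contra hkl
    exact (htop k (by simpa using ⟨l, hkl⟩)).not_gt hk
  let D : Matrix ι ι R := diagonal fun k => if b k = p then 1 else 0
  have hDX : D * X = X * D := by
    ext k l
    by_cases hkl : b k = b l
    · simp [D, hkl]
    · simp [D, hX k l hkl]
  have hDVN : D * (V * N) = 0 := by
    ext k l
    by_cases hk : b k = p
    · simpa [D, hk] using mul_apply_eq_zero_of_forall fun m =>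
        if hkm : b k < b m then .inr (hN_above m l (hk ▸ hkm)) else .inl (hV k m hkm)
    · simp [D, hk]
  have hcomm : X * (D * N) = D * N * X := calc
    X * (D * N) = D * X * N + D * (V * N) := by rw [hDVN, add_zero, hDX, mul_assoc]
    _ = D * ((X + V) * N) := by rw [add_mul, mul_add, mul_assoc]
    _ = D * N * X := by rw [← h, mul_assoc]
  have hlt : b i < b j := by_contra fun hij' => hij (hN i j hij')
  exact hij (by simpa [D, p] using hcent _ hcomm i j hlt.ne)

theorem existsUnique_mem_strictUpperBlock_mul_sub_mul_eq {F : Type*} [Field F]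
    {X V : Matrix ι ι F} (hX : ∀ i j, b i ≠ b j → X i j = 0)
    (hcent : ∀ Y : Matrix ι ι F, X * Y = Y * X → ∀ i j, b i ≠ b j → Y i j = 0)
    (hV : V ∈ strictUpperBlock F b) :
    ∃! N, N ∈ strictUpperBlock F b ∧ N * X - (X + V) * N = V := by
  have hXV : (X + V).BlockTriangular b :=
    (blockTriangular_of_blockDiagonal hX).add (blockTriangular_of_mem_strictUpperBlock hV)
  let T : strictUpperBlock F b →ₗ[F] strictUpperBlock F b :=
    (LinearMap.mulRight F X - LinearMap.mulLeft F (X + V)).restrict fun N hN =>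
      sub_mem (mul_mem_strictUpperBlock_of_blockTriangular hN
        (blockTriangular_of_blockDiagonal hX)) (hXV.mul_mem_strictUpperBlock hN)
  have hT : ∀ N : strictUpperBlock F b, (T N : Matrix ι ι F) = N * X - (X + V) * N :=
    fun _ => rfl
  have hinj : Function.Injective T := by
    refine (injective_iff_map_eq_zero T).2 fun N hN => Subtype.ext ?_
    refine eq_zero_of_mul_eq_mul_of_mem_strictUpperBlock hX hcent hV N.2 (sub_eq_zero.1 ?_)
    rw [← hT, hN, ZeroMemClass.coe_zero]
  obtain ⟨N, hN⟩ := LinearMap.injective_iff_surjective.1 hinj ⟨V, hV⟩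
  refine ⟨N, ⟨N.2, by rw [← hT, hN]⟩, fun M ⟨hM, hMV⟩ => ?_⟩
  exact congrArg Subtype.val (@hinj ⟨M, hM⟩ N (Subtype.ext (by rw [hT, hMV, hN])))

theorem isUnit_one_add_of_mem_strictUpperBlock [CommRing R] [DecidableEq ι] {N : Matrix ι ι R}
    (hN : N ∈ strictUpperBlock R b) : IsUnit (1 + N) := by
  have hblock : ∀ a, (1 + N).toSquareBlock b a = 1 := fun a => by
    ext ⟨i, hi⟩ ⟨j, hj⟩
    have hij : N i j = 0 := hN i j (by simp_all)
    simp [toSquareBlock_def, one_apply, hij]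
  rw [isUnit_iff_isUnit_det, ((blockTriangular_one).add
    (blockTriangular_of_mem_strictUpperBlock hN)).det]
  simp [hblock]

end Matrix

theorem one_add_mul_eq_mul_one_add_iff {A : Type*} [Ring A] {N X Y : A} :
    (1 + N) * X = Y * (1 + N) ↔ N * X - Y * N = Y - X := by
  rw [add_mul, mul_add, one_mul, mul_one, sub_eq_sub_iff_add_eq_add, add_comm (N * X)]

/-- Matrix form of the implication (5) ⇒ (7): if every matrix commuting with
the block-diagonal matrix `X` is block diagonal, then every `X + V` with `V`
strictly upper-block is conjugate to `X` by a unique unipotent element `1 + N`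
with `N` strictly upper-block. -/
theorem stmt_2 (F : Type*) [Field F] (n : ℕ) (b : Fin n → ℕ)
    (X : Matrix (Fin n) (Fin n) F)
    (hX : ∀ i j, b i ≠ b j → X i j = 0)
    (hcent : ∀ Y : Matrix (Fin n) (Fin n) F, X * Y = Y * X →
      ∀ i j, b i ≠ b j → Y i j = 0) :
    ∀ V : Matrix (Fin n) (Fin n) F, (∀ i j, ¬ b i < b j → V i j = 0) →
      (∃! N : Matrix (Fin n) (Fin n) F,
        (∀ i j, ¬ b i < b j → N i j = 0) ∧ (1 + N) * X = (X + V) * (1 + N)) ∧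
      ∃ u : (Matrix (Fin n) (Fin n) F)ˣ,
        (u : Matrix (Fin n) (Fin n) F) * X = (X + V) * (u : Matrix (Fin n) (Fin n) F) := by
  intro V hV
  have hconj : ∀ N : Matrix (Fin n) (Fin n) F,
      (1 + N) * X = (X + V) * (1 + N) ↔ N * X - (X + V) * N = V := fun N => by
    rw [one_add_mul_eq_mul_one_add_iff, add_sub_cancel_left]
  simp_rw [hconj]
  have hsol := Matrix.existsUnique_mem_strictUpperBlock_mul_sub_mul_eq hX hcent hV
  obtain ⟨N, hN, hNV⟩ := hsol.exists
  exact ⟨hsol, (Matrix.isUnit_one_add_of_mem_strictUpperBlock hN).unit, (hconj N).2 hNV⟩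
end

section
/- Let F be a field of characteristic 0, let n be a natural number, let b : Fin n → ℕ be a block-index function, and let S, M be n×n matrices over F that are both block diagonal with respect to b, such that the minimal polynomial of S over F is squarefree, M is nilpotent, and S*M = M*S. Set Y = S + M, and let U be a strictly upper-block matrix (U i j = 0 unless b i < b j). Then there exist strictly upper-block matrices N and V with S*V = V*S such that (1 + N) * (Y + U) = (Y + V) * (1 + N); that is, Y + U is conjugate, by the unipotent element 1 + N, to Y + V where V lies in the strictly upper-block part of the centralizer of the semisimple part S. -/
namespace Stmt3Aux

open Polynomial

variable {F : Type*} [Field F] {n : ℕ}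

/-- `W` vanishes at `(i,j)` unless `c j ≥ c i + k`. -/
def Pk (c : Fin n → ℕ) (k : ℕ) (W : Matrix (Fin n) (Fin n) F) : Prop :=
  ∀ i j, c j < c i + k → W i j = 0

namespace Pk

variable {c : Fin n → ℕ} {k l : ℕ} {W W' : Matrix (Fin n) (Fin n) F}

theorem mono (h : Pk c l W) (hkl : k ≤ l) : Pk c k W :=
  fun i j hij => h i j (by omega)

theorem add (h : Pk c k W) (h' : Pk c k W') : Pk c k (W + W') := fun i j hij => by
  rw [Matrix.add_apply, h i j hij, h' i j hij, add_zero]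

theorem zero : Pk c k (0 : Matrix (Fin n) (Fin n) F) := fun _ _ _ => rfl

theorem neg (h : Pk c k W) : Pk c k (-W) := fun i j hij => by
  rw [Matrix.neg_apply, h i j hij, neg_zero]

theorem sub (h : Pk c k W) (h' : Pk c k W') : Pk c k (W - W') := by
  rw [sub_eq_add_neg]; exact h.add h'.neg

theorem smul (a : F) (h : Pk c k W) : Pk c k (a • W) := fun i j hij => by
  rw [Matrix.smul_apply, h i j hij, smul_zero]

theorem mul (h : Pk c k W) (h' : Pk c l W') : Pk c (k + l) (W * W') := by
  intro i j hij
  rw [Matrix.mul_apply]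
  refine Finset.sum_eq_zero fun m _ => ?_
  by_cases hm : c m < c i + k
  · rw [h i m hm, zero_mul]
  · rw [h' m j (by omega), mul_zero]

theorem eq_zero (hc : ∀ i, c i < n) (h : Pk c n W) : W = 0 := by
  ext i j
  exact h i j (by have := hc j; omega)

/-- powers of a `Pk c k` matrix, `k ≥ 1`, get deeper. -/
theorem pow (hk : 1 ≤ k) (h : Pk c k W) : ∀ j, Pk c (j + 1) (W ^ (j + 1))
  | 0 => by simpa using h.mono hk
  | (j + 1) => by
      have := (pow hk h j).mul (h.mono hk)
      rwa [← pow_succ] at this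

/-- powers of a `Pk c k` matrix stay in `Pk c k`. -/
theorem pow' (h : Pk c k W) : ∀ j, Pk c k (W ^ (j + 1))
  | 0 => by simpa using h
  | (j + 1) => by
      have := (pow' h j).mul h
      rw [← pow_succ] at this
      exact this.mono (by omega)

end Pk

theorem aeval_mulLeft_eq (S : Matrix (Fin n) (Fin n) F) (p : F[X]) :
    aeval (LinearMap.mulLeft F S : Module.End F (Matrix (Fin n) (Fin n) F)) p
      = LinearMap.mulLeft F (aeval S p) := by
  induction p using Polynomial.induction_on' with
  | add p q hp hq =>
      ext W
      simp only [map_add, LinearMap.add_apply, hp, hq, LinearMap.mulLeft_apply, add_mul]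
  | monomial m a =>
      ext W
      simp only [aeval_monomial, Module.End.mul_apply, LinearMap.pow_mulLeft,
        Module.algebraMap_end_apply, LinearMap.mulLeft_apply]
      rw [← Algebra.smul_def, smul_mul_assoc]

theorem aeval_mulRight_eq (S : Matrix (Fin n) (Fin n) F) (p : F[X]) :
    aeval (LinearMap.mulRight F S : Module.End F (Matrix (Fin n) (Fin n) F)) p
      = LinearMap.mulRight F (aeval S p) := by
  induction p using Polynomial.induction_on' with
  | add p q hp hq =>
      ext W
      simp only [map_add, LinearMap.add_apply, hp, hq, LinearMap.mulRight_apply, mul_add]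
  | monomial m a =>
      ext W
      simp only [aeval_monomial, Module.End.mul_apply, LinearMap.pow_mulRight,
        Module.algebraMap_end_apply, LinearMap.mulRight_apply]
      rw [← Algebra.smul_def, mul_smul_comm]

theorem keyfact [CharZero F] (S : Matrix (Fin n) (Fin n) F)
    (hmin : Squarefree (minpoly F S)) :
    ∃ r : F[X], r.eval 0 ≠ 0 ∧
      (LinearMap.mulLeft F S - LinearMap.mulRight F S : Module.End F (Matrix (Fin n) (Fin n) F))
        * (aeval (LinearMap.mulLeft F S - LinearMap.mulRight F S :
            Module.End F (Matrix (Fin n) (Fin n) F)) r) = 0 := by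
  set A : Module.End F (Matrix (Fin n) (Fin n) F) :=
    LinearMap.mulLeft F S - LinearMap.mulRight F S with hA
  have hssL : Module.End.IsSemisimple
      (LinearMap.mulLeft F S : Module.End F (Matrix (Fin n) (Fin n) F)) := by
    refine Module.End.isSemisimple_of_squarefree_aeval_eq_zero hmin ?_
    rw [aeval_mulLeft_eq, minpoly.aeval]
    ext W; simp
  have hssR : Module.End.IsSemisimple
      (LinearMap.mulRight F S : Module.End F (Matrix (Fin n) (Fin n) F)) := by
    refine Module.End.isSemisimple_of_squarefree_aeval_eq_zero hmin ?_
    rw [aeval_mulRight_eq, minpoly.aeval]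
    ext W; simp
  have hssA : A.IsSemisimple :=
    Module.End.IsSemisimple.sub_of_commute (LinearMap.commute_mulLeft_right S S) hssL hssR
  have hq : Squarefree (minpoly F A) := hssA.minpoly_squarefree
  have hq0 : aeval A (minpoly F A) = 0 := minpoly.aeval F A
  by_cases hX : (X : F[X]) ∣ minpoly F A
  · obtain ⟨r, hr⟩ := hX
    refine ⟨r, ?_, ?_⟩
    · intro h0
      have : (X : F[X]) ∣ r := by
        rwa [X_dvd_iff, coeff_zero_eq_eval_zero]
      obtain ⟨t, ht⟩ := this
      have : IsUnit (X : F[X]) := hq X ⟨t, by rw [hr, ht]; ring⟩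
      exact Polynomial.not_isUnit_X this
    · have : A * aeval A r = aeval A (minpoly F A) := by
        rw [hr, map_mul, aeval_X]
      rw [this, hq0]
  · refine ⟨minpoly F A, ?_, by rw [hq0, mul_zero]⟩
    rw [X_dvd_iff, coeff_zero_eq_eval_zero] at hX; exact hX

theorem core [CharZero F] (c : Fin n → ℕ) (hc : ∀ i, c i < n)
    (S M : Matrix (Fin n) (Fin n) F)
    (hS0 : Pk c 0 S) (hM0 : Pk c 0 M)
    (hmin : Squarefree (minpoly F S))
    (hnil : IsNilpotent M)
    (hcomm : S * M = M * S) :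
    ∀ (m k : ℕ) (V0 W : Matrix (Fin n) (Fin n) F), 1 ≤ k → n ≤ k + m →
      Pk c 1 V0 → S * V0 = V0 * S → Pk c k W →
      ∃ N Vf : Matrix (Fin n) (Fin n) F, Pk c 1 N ∧ Pk c 1 Vf ∧ S * Vf = Vf * S ∧
        (1 + N) * ((S + M) + (V0 + W)) = ((S + M) + Vf) * (1 + N) := by
  obtain ⟨r, hr0ne, hAr⟩ := keyfact S hmin
  set A : Module.End F (Matrix (Fin n) (Fin n) F) :=
    LinearMap.mulLeft F S - LinearMap.mulRight F S with hAdef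
  set B : Module.End F (Matrix (Fin n) (Fin n) F) :=
    LinearMap.mulLeft F M - LinearMap.mulRight F M with hBdef
  have hA_app : ∀ W, A W = S * W - W * S := fun W => by
    rw [hAdef]; simp [LinearMap.sub_apply]
  have hB_app : ∀ W, B W = M * W - W * M := fun W => by
    rw [hBdef]; simp [LinearMap.sub_apply]
  -- A and B commute
  have hAB : Commute A B := by
    refine LinearMap.ext fun W => ?_
    simp only [Module.End.mul_apply, hA_app, hB_app]
    have h1 : S * (M * W) = M * (S * W) := by rw [← mul_assoc, ← mul_assoc, hcomm]
    have h2 : W * M * S = W * S * M := by rw [mul_assoc, mul_assoc, ← hcomm]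
    simp only [mul_sub, sub_mul]
    rw [h1, h2, mul_assoc M W S, ← mul_assoc S W M]
    abel
  -- B is nilpotent
  have hBnil : IsNilpotent B := by
    rw [hBdef]
    obtain ⟨J, hJ⟩ := hnil
    refine Commute.isNilpotent_sub (LinearMap.commute_mulLeft_right M M) ?_ ?_
    · exact ⟨J, by rw [LinearMap.pow_mulLeft, hJ]; ext W : 1; simp⟩
    · exact ⟨J, by rw [LinearMap.pow_mulRight, hJ]; ext W : 1; simp⟩
  -- Pk preservation
  have hPA : ∀ k W, Pk c k W → Pk c k (A W) := by
    intro k W h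
    rw [hA_app]
    exact (by simpa using hS0.mul h : Pk c k (S * W)).sub (h.mul hS0)
  have hPB : ∀ k W, Pk c k W → Pk c k (B W) := by
    intro k W h
    rw [hB_app]
    exact (by simpa using hM0.mul h : Pk c k (M * W)).sub (h.mul hM0)
  have hPpow : ∀ (m k : ℕ) (W), Pk c k W → Pk c k ((A ^ m) W) := by
    intro m
    induction m with
    | zero => intro k W h; simpa using h
    | succ m ih =>
        intro k W h
        rw [pow_succ, Module.End.mul_apply]
        exact ih _ _ (hPA _ _ h)
  have hPaeval : ∀ (p : F[X]) (k : ℕ) (W), Pk c k W → Pk c k ((aeval A p) W) := by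
    intro p
    induction p using Polynomial.induction_on' with
    | add p q hp hq =>
        intro k W h
        rw [map_add, LinearMap.add_apply]
        exact (hp k W h).add (hq k W h)
    | monomial m a =>
        intro k W h
        rw [aeval_monomial, Module.End.mul_apply, Module.algebraMap_end_apply]
        exact Pk.smul a (hPpow m k W h)
  -- commutation with polynomials in A
  have hCommPoly : ∀ (f : Module.End F (Matrix (Fin n) (Fin n) F)), Commute A f →
      ∀ p : F[X], Commute f (aeval A p) := by
    intro f hf p
    induction p using Polynomial.induction_on' with
    | add p q hp hq => rw [map_add]; exact hp.add_right hq
    | monomial m a =>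
        rw [aeval_monomial]
        exact (Algebra.commute_algebraMap_right a f).mul_right (hf.symm.pow_right m)
  have hAcomm : ∀ p : F[X], Commute A (aeval A p) := hCommPoly A (Commute.refl A)
  -- the polynomial s with r = C r0 + X * s
  set r0 := r.eval 0 with hr0def
  obtain ⟨s, hs⟩ : ∃ s, r - C r0 = X * s := by
    have : (X : F[X]) ∣ (r - C r0) := by
      rw [X_dvd_iff, coeff_sub, coeff_C_zero, coeff_zero_eq_eval_zero, sub_self]
    exact this
  set G : Module.End F (Matrix (Fin n) (Fin n) F) := aeval A (C (-r0⁻¹) * s) with hGdef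
  have hAGc : Commute A G := by rw [hGdef]; exact hAcomm _
  have hBGc : Commute B G := by rw [hGdef]; exact hCommPoly B hAB _
  have hPG : ∀ (k : ℕ) (W), Pk c k W → Pk c k (G W) := by
    intro k W h; rw [hGdef]; exact hPaeval _ _ _ h
  have hG : A * G * A = A := by
    have e1 : A * G * A = aeval A (X * (C (-r0⁻¹) * s) * X) := by
      rw [map_mul, map_mul, aeval_X, hGdef]
    have e2 : (X : F[X]) * (C (-r0⁻¹) * s) * X = C (-r0⁻¹) * ((r - C r0) * X) := by
      rw [hs]; ring
    rw [e1, e2, map_mul, map_mul, map_sub, aeval_X, aeval_C, aeval_C]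
    rw [sub_mul, ← (hAcomm r).eq, hAr, zero_sub, ← Algebra.smul_def, ← Algebra.smul_def]
    rw [smul_neg, neg_smul, neg_neg, smul_smul, inv_mul_cancel₀ hr0ne, one_smul]
  have hGfix : ∀ u, A (G (A u)) = A u := by
    intro u
    have := congrArg (fun f : Module.End F (Matrix (Fin n) (Fin n) F) => f u) hG
    simpa [Module.End.mul_apply] using this
  -- the solver
  obtain ⟨J, hJ⟩ := hBnil
  have solv : ∀ (m k : ℕ) (u : Matrix (Fin n) (Fin n) F), Pk c k u → (B ^ m) u = 0 →
      ∃ x, Pk c k x ∧ (A + B) x = A u := by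
    intro m
    induction m with
    | zero =>
        intro k u hu h0
        rw [pow_zero, Module.End.one_apply] at h0
        exact ⟨0, Pk.zero, by rw [h0]; simp⟩
    | succ m ih =>
        intro k u hu h0
        have hBG : Commute A (B * G) := hAB.mul_right hAGc
        have hside : (B ^ m) (-(B (G u))) = 0 := by
          rw [map_neg, ← Module.End.mul_apply, ← pow_succ, neg_eq_zero]
          have hpow : Commute (B ^ (m + 1)) G := (hBGc.pow_left (m + 1))
          calc (B ^ (m + 1)) (G u) = ((B ^ (m + 1)) * G) u := rfl
            _ = (G * (B ^ (m + 1))) u := by rw [hpow.eq]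
            _ = G ((B ^ (m + 1)) u) := rfl
            _ = 0 := by rw [h0, map_zero]
        obtain ⟨x', hx', hx'eq⟩ := ih k (-(B (G u))) ((hPB _ _ (hPG _ _ hu)).neg) hside
        refine ⟨G (A u) + x', (hPG _ _ (hPA _ _ hu)).add hx', ?_⟩
        rw [map_add, hx'eq, map_neg]
        have e1 : (A + B) (G (A u)) = A u + B (G (A u)) := by
          rw [LinearMap.add_apply, hGfix]
        have e2 : B (G (A u)) = A (B (G u)) := by
          have := congrArg (fun f : Module.End F (Matrix (Fin n) (Fin n) F) => f u) hBG.eq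
          simpa [Module.End.mul_apply] using this.symm
        rw [e1, e2, add_neg_cancel_right]
  -- decomposition
  have dec : ∀ (k : ℕ) (W : Matrix (Fin n) (Fin n) F), Pk c k W →
      ∃ Wc Xx, Pk c k Wc ∧ Pk c k Xx ∧ S * Wc = Wc * S ∧
        W = Wc + ((S + M) * Xx - Xx * (S + M)) := by
    intro k W hW
    set Wc := r0⁻¹ • (aeval A r) W with hWcdef
    have hWcP : Pk c k Wc := Pk.smul _ (hPaeval r k W hW)
    have hAWc : A Wc = 0 := by
      rw [hWcdef, map_smul, ← Module.End.mul_apply, hAr, LinearMap.zero_apply, smul_zero]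
    have hWcS : S * Wc = Wc * S := by
      have := hAWc
      rw [hA_app] at this
      exact sub_eq_zero.mp this
    set u := -(r0⁻¹ • (aeval A s) W) with hudef
    have huP : Pk c k u := (Pk.smul _ (hPaeval s k W hW)).neg
    have hAu : A u = W - Wc := by
      have e : aeval A r = algebraMap F _ r0 + A * aeval A s := by
        conv_lhs => rw [show r = C r0 + X * s by rw [← hs]; ring]
        rw [map_add, aeval_C, map_mul, aeval_X]
      have e2 : (aeval A r) W = r0 • W + A ((aeval A s) W) := by
        rw [e, LinearMap.add_apply, Module.algebraMap_end_apply, Module.End.mul_apply]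
      rw [hudef, hWcdef, map_neg, map_smul, e2, smul_add, smul_smul,
        inv_mul_cancel₀ hr0ne, one_smul]
      abel
    obtain ⟨Xx, hXxP, hXxeq⟩ := solv J k u huP (by rw [hJ, LinearMap.zero_apply])
    refine ⟨Wc, Xx, hWcP, hXxP, hWcS, ?_⟩
    have e3 : (A + B) Xx = (S + M) * Xx - Xx * (S + M) := by
      rw [LinearMap.add_apply, hA_app, hB_app]
      noncomm_ring
    rw [← e3, hXxeq, hAu]
    abel
  -- main induction
  intro m
  induction m with
  | zero =>
      intro k V0 W hk hkm hV0 hV0c hW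
      have hW0 : W = 0 := Pk.eq_zero hc (hW.mono (by omega))
      refine ⟨0, V0, Pk.zero, hV0, hV0c, ?_⟩
      rw [hW0]
      noncomm_ring
  | succ m ih =>
      intro k V0 W hk hkm hV0 hV0c hW
      obtain ⟨Wc, Xx, hWcP, hXxP, hWcS, hWdec⟩ := dec k W hW
      have hXx1 : Pk c 1 Xx := hXxP.mono hk
      -- inverse of 1 + Xx
      have hXn1 : (-Xx) ^ (n + 1) = 0 :=
        Pk.eq_zero hc (((hXx1.neg).pow le_rfl n).mono (by omega))
      set T : Matrix (Fin n) (Fin n) F := ∑ j ∈ Finset.range (n + 1), (-Xx) ^ (j + 1) with hTdef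
      have hTP : Pk c k T := by
        rw [hTdef]
        refine Finset.sum_induction _ (Pk c k) (fun a b ha hb => ha.add hb) Pk.zero ?_
        intro j _
        exact (hXxP.neg).pow' j
      have h1T : (1 : Matrix (Fin n) (Fin n) F) + T = ∑ j ∈ Finset.range (n + 2), (-Xx) ^ j := by
        rw [Finset.sum_range_succ', hTdef, pow_zero, add_comm]
      have hinv2 : (1 + T) * (1 + Xx) = 1 := by
        rw [h1T]
        have hgeo := geom_sum_mul (-Xx) (n + 2)
        have h0 : (-Xx) ^ (n + 2) = 0 := by rw [pow_succ, hXn1, zero_mul]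
        rw [h0, zero_sub] at hgeo
        have h2 : (1 : Matrix (Fin n) (Fin n) F) + Xx = -((-Xx) - 1) := by rw [neg_sub, sub_neg_eq_add]
        rw [h2, mul_neg, hgeo, neg_neg]
      have hinv1 : (1 + Xx) * (1 + T) = 1 := mul_eq_one_comm.mpr hinv2
      set R : Matrix (Fin n) (Fin n) F :=
        (1 + Xx) * ((S + M) + (V0 + W)) - ((S + M) + (V0 + Wc)) * (1 + Xx) with hRdef
      have hR : R = Xx * (V0 + W) - (V0 + Wc) * Xx := by
        rw [hRdef, hWdec]
        noncomm_ring
      have hRP : Pk c (k + 1) R := by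
        have h1 : Pk c (k + 1) (Xx * (V0 + W)) := hXxP.mul (hV0.add (hW.mono hk))
        have h2 : Pk c (k + 1) ((V0 + Wc) * Xx) := by
          have := (hV0.add (hWcP.mono hk)).mul hXxP
          rwa [Nat.add_comm 1 k] at this
        rw [hR]
        exact h1.sub h2
      set W' : Matrix (Fin n) (Fin n) F := R * (1 + T) with hW'def
      have hW'P : Pk c (k + 1) W' := by
        rw [hW'def, mul_add, mul_one]
        exact hRP.add ((hRP.mul hTP).mono (by omega))
      have hW'X : W' * (1 + Xx) = R := by
        rw [hW'def, mul_assoc, hinv2, mul_one]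
      have hconj : (1 + Xx) * ((S + M) + (V0 + W))
          = ((S + M) + ((V0 + Wc) + W')) * (1 + Xx) := by
        have e : ((S + M) + ((V0 + Wc) + W')) * (1 + Xx)
            = ((S + M) + (V0 + Wc)) * (1 + Xx) + W' * (1 + Xx) := by noncomm_ring
        rw [e, hW'X, hRdef]
        abel
      obtain ⟨N', Vf, hN', hVfP, hVfc, hfin⟩ :=
        ih (k + 1) (V0 + Wc) W' (by omega) (by omega) (hV0.add (hWcP.mono hk))
          (by rw [mul_add, add_mul, hV0c, hWcS]) hW'P
      refine ⟨N' + Xx + N' * Xx, Vf, ?_, hVfP, hVfc, ?_⟩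
      · exact (hN'.add hXx1).add ((hN'.mul hXx1).mono (by omega))
      · have hNfac : (1 : Matrix (Fin n) (Fin n) F) + (N' + Xx + N' * Xx)
            = (1 + N') * (1 + Xx) := by noncomm_ring
        rw [hNfac, mul_assoc, hconj, ← mul_assoc, hfin, mul_assoc]

end Stmt3Aux

/-- Matrix form of the lemma after Chaudouard: for `Y = S + M` a Jordan
decomposition in the block-diagonal Levi algebra and `U` strictly
upper-block, `Y + U` is conjugate by a unipotent `1 + N` to `Y + V` with `V`
strictly upper-block and commuting with the semisimple part `S`. -/
theorem stmt_3 (F : Type*) [Field F] [CharZero F] (n : ℕ) (b : Fin n → ℕ)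
    (S M : Matrix (Fin n) (Fin n) F)
    (hS : ∀ i j, b i ≠ b j → S i j = 0)
    (hM : ∀ i j, b i ≠ b j → M i j = 0)
    (hmin : Squarefree (minpoly F S))
    (hnil : IsNilpotent M)
    (hcomm : S * M = M * S)
    (U : Matrix (Fin n) (Fin n) F)
    (hU : ∀ i j, ¬ b i < b j → U i j = 0) :
    ∃ N V : Matrix (Fin n) (Fin n) F,
      (∀ i j, ¬ b i < b j → N i j = 0) ∧
      (∀ i j, ¬ b i < b j → V i j = 0) ∧
      S * V = V * S ∧
      (1 + N) * ((S + M) + U) = ((S + M) + V) * (1 + N) := by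
  classical
  set c : Fin n → ℕ :=
    fun i => ((Finset.univ.image b).filter (fun v => v < b i)).card with hcdef
  have hmono : ∀ i j, b i < b j → c i < c j := by
    intro i j hij
    refine Finset.card_lt_card ⟨?_, ?_⟩
    · intro v hv
      rw [Finset.mem_filter] at hv ⊢
      exact ⟨hv.1, lt_trans hv.2 hij⟩
    · intro hsub
      have h1 : b i ∈ (Finset.univ.image b).filter (fun v => v < b j) := by
        rw [Finset.mem_filter]
        exact ⟨Finset.mem_image_of_mem b (Finset.mem_univ i), hij⟩
      have h2 := hsub h1
      rw [Finset.mem_filter] at h2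
      exact lt_irrefl _ h2.2
  have heq : ∀ i j, b i = b j → c i = c j := by
    intro i j h
    simp only [hcdef]
    rw [h]
  have hlt : ∀ i j, c i < c j → b i < b j := by
    intro i j h
    rcases lt_trichotomy (b i) (b j) with h' | h' | h'
    · exact h'
    · exact absurd (heq i j h') (by omega)
    · exact absurd (hmono j i h') (by omega)
  have hc : ∀ i, c i < n := by
    intro i
    calc c i < (Finset.univ.image b).card := by
          refine Finset.card_lt_card ⟨Finset.filter_subset _ _, fun hsub => ?_⟩
          have := hsub (Finset.mem_image_of_mem b (Finset.mem_univ i))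
          rw [Finset.mem_filter] at this
          exact lt_irrefl _ this.2
      _ ≤ Finset.univ.card := Finset.card_image_le
      _ = n := by simp
  have hS0 : Stmt3Aux.Pk c 0 S := by
    intro i j hij
    exact hS i j fun h => absurd (heq i j h) (by omega)
  have hM0 : Stmt3Aux.Pk c 0 M := by
    intro i j hij
    exact hM i j fun h => absurd (heq i j h) (by omega)
  have hU1 : Stmt3Aux.Pk c 1 U := by
    intro i j hij
    exact hU i j fun hb => by have := hmono i j hb; omega
  obtain ⟨N, Vf, hN, hVf, hVfc, heqn⟩ :=
    Stmt3Aux.core c hc S M hS0 hM0 hmin hnil hcomm n 1 0 U le_rfl (by omega)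
      Stmt3Aux.Pk.zero (by rw [mul_zero, zero_mul]) hU1
  refine ⟨N, Vf, ?_, ?_, hVfc, ?_⟩
  · intro i j hb
    refine hN i j ?_
    have : ¬ c i < c j := fun h => hb (hlt i j h)
    omega
  · intro i j hb
    refine hVf i j ?_
    have : ¬ c i < c j := fun h => hb (hlt i j h)
    omega
  · rw [zero_add] at heqn
    exact heqn
end

section
/- Let F be a field of characteristic 0, let K be an algebraic closure of F, and let A be a finite-dimensional F-algebra that is a semisimple ring. Let x, y ∈ A. If there exists a unit u of the K-algebra K ⊗_F A such that u * (1 ⊗ x) = (1 ⊗ y) * u, then there exists a unit v of A such that v * x = y * v. In other words, two elements of A that become conjugate over the algebraic closure are already conjugate by a unit of A. -/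
open scoped TensorProduct

/-!
The elements of `A` conjugating `x` to `y` form an `F`-subspace `V`, and since `K` is flat over
`F`, those of `K ⊗ A` conjugating `1 ⊗ x` to `1 ⊗ y` form `K ⊗ V`. For a basis `(vᵢ)` of `V`,
`t ↦ det (left multiplication by ∑ tᵢ vᵢ)` is a polynomial over `F`; it is nonzero because it does
not vanish at the `K`-point given by the coordinates of the unit `u`. As `F` is infinite, it is
then nonzero at some `F`-point, which gives a unit of `A` lying in `V`.
-/

open MvPolynomial in
theorem Matrix.aeval_det_sum_X_smul {F S ι n : Type*} [CommRing F] [CommRing S] [Algebra F S]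
    [Fintype ι] [Fintype n] [DecidableEq n] (M : ι → Matrix n n F) (s : ι → S) :
    aeval s (∑ i, (X i : MvPolynomial ι F) • (M i).map C).det =
      (∑ i, s i • (M i).map (algebraMap F S)).det := by
  rw [AlgHom.map_det]
  congr 1
  ext j k
  simp only [AlgHom.mapMatrix_apply, Matrix.map_apply, Matrix.sum_apply, Matrix.smul_apply,
    map_sum, smul_eq_mul, map_mul, aeval_X, aeval_C]

open MvPolynomial in
theorem Matrix.exists_det_sum_smul_ne_zero_of_map {F K ι n : Type*} [CommRing F] [IsDomain F]
    [Infinite F] [CommRing K] [Algebra F K] [Fintype ι] [Fintype n] [DecidableEq n]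
    (M : ι → Matrix n n F) {c : ι → K}
    (hc : (∑ i, c i • (M i).map (algebraMap F K)).det ≠ 0) :
    ∃ t : ι → F, (∑ i, t i • M i).det ≠ 0 := by
  have hP : (∑ i, (X i : MvPolynomial ι F) • (M i).map C).det ≠ 0 := fun h => by
    rw [← aeval_det_sum_X_smul, h, map_zero] at hc
    exact hc rfl
  by_contra! h
  refine hP (MvPolynomial.funext fun t => ?_)
  rw [map_zero, ← aeval_eq_eval, aeval_det_sum_X_smul]
  simpa using h t

theorem isUnit_iff_isUnit_det_toMatrix_lmul {R A κ : Type*} [CommRing R] [Ring A] [Algebra R A]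
    [Fintype κ] [DecidableEq κ] (b : Module.Basis κ R A) (x : A) :
    IsUnit x ↔ IsUnit (LinearMap.toMatrix b b (Algebra.lmul R A x)).det := by
  rw [← Matrix.isUnit_iff_isUnit_det, LinearMap.isUnit_toMatrix_iff, Algebra.lmul_isUnit_iff]

theorem exists_isUnit_sum_smul_of_isUnit_sum_smul_tmul {F K A ι : Type*} [Field F] [Infinite F]
    [CommRing K] [Nontrivial K] [Algebra F K] [Ring A] [Algebra F A] [FiniteDimensional F A]
    [Fintype ι] (a : ι → A) {c : ι → K} (hc : IsUnit (∑ i, c i • (1 : K) ⊗ₜ[F] a i)) :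
    ∃ t : ι → F, IsUnit (∑ i, t i • a i) := by
  classical
  let b := Module.finBasis F A
  let M i := LinearMap.toMatrix b b (Algebra.lmul F A (a i))
  rw [isUnit_iff_isUnit_det_toMatrix_lmul (Algebra.TensorProduct.basis K b)] at hc
  obtain ⟨t, ht⟩ := Matrix.exists_det_sum_smul_ne_zero_of_map M (c := c) (by
    simpa [M, ← Algebra.baseChange_lmul, LinearMap.toMatrix_baseChange] using hc.ne_zero)
  refine ⟨t, (isUnit_iff_isUnit_det_toMatrix_lmul b _).2 ?_⟩
  simpa [M] using ht.isUnit

open TensorProduct in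
theorem Submodule.exists_isUnit_mem_of_mem_range_lTensor {F K A : Type*} [Field F] [Infinite F]
    [CommRing K] [Nontrivial K] [Algebra F K] [Ring A] [Algebra F A] [FiniteDimensional F A]
    (V : Submodule F A) {u : K ⊗[F] A}
    (hV : u ∈ LinearMap.range (AlgebraTensorModule.lTensor K K V.subtype)) (hu : IsUnit u) :
    ∃ v ∈ V, IsUnit v := by
  obtain ⟨w, rfl⟩ := hV
  let b := Module.finBasis F V
  have hw : AlgebraTensorModule.lTensor K K V.subtype w =
      ∑ i, (Algebra.TensorProduct.basis K b).repr w i • (1 : K) ⊗ₜ[F] (b i : A) := by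
    conv_lhs => rw [← (Algebra.TensorProduct.basis K b).sum_repr w]
    simp [Algebra.TensorProduct.basis_apply]
  rw [hw] at hu
  obtain ⟨t, ht⟩ := exists_isUnit_sum_smul_of_isUnit_sum_smul_tmul (fun i => (b i : A)) hu
  exact ⟨_, V.sum_mem fun i _ => V.smul_mem (t i) (b i).2, ht⟩

theorem TensorProduct.AlgebraTensorModule.lTensor_mulLeft {R S A : Type*} [CommSemiring R]
    [CommSemiring S] [Algebra R S] [Semiring A] [Algebra R A] (a : A) :
    lTensor S S (LinearMap.mulLeft R a) = LinearMap.mulLeft S ((1 : S) ⊗ₜ[R] a) := by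
  ext; simp

theorem TensorProduct.AlgebraTensorModule.lTensor_mulRight {R S A : Type*} [CommSemiring R]
    [CommSemiring S] [Algebra R S] [Semiring A] [Algebra R A] (a : A) :
    lTensor S S (LinearMap.mulRight R a) = LinearMap.mulRight S ((1 : S) ⊗ₜ[R] a) := by
  ext; simp

theorem stmt_4_general (F K : Type*) [Field F] [CharZero F] [Field K] [Algebra F K]
    (A : Type*) [Ring A] [Algebra F A] [FiniteDimensional F A]
    (x y : A)
    (h : ∃ u : (K ⊗[F] A)ˣ,
      (u : K ⊗[F] A) * ((1 : K) ⊗ₜ[F] x) = ((1 : K) ⊗ₜ[F] y) * (u : K ⊗[F] A)) :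
    ∃ v : Aˣ, (v : A) * x = y * (v : A) := by
  obtain ⟨u, hu⟩ := h
  have hV : (u : K ⊗[F] A) ∈ LinearMap.range (TensorProduct.AlgebraTensorModule.lTensor K K
      (LinearMap.eqLocus (LinearMap.mulRight F x) (LinearMap.mulLeft F y)).subtype) := by
    rw [← Module.Flat.eqLocus_lTensor_eq, TensorProduct.AlgebraTensorModule.lTensor_mulRight,
      TensorProduct.AlgebraTensorModule.lTensor_mulLeft]
    exact hu
  obtain ⟨v, hv, hv_unit⟩ := Submodule.exists_isUnit_mem_of_mem_range_lTensor _ hV u.isUnit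
  exact ⟨hv_unit.unit, hv⟩

/-- In a finite-dimensional semisimple algebra over a field of characteristic
zero, two elements which become conjugate over an algebraic closure are
already conjugate by a unit of the algebra. -/
theorem stmt_4 (F K : Type*) [Field F] [CharZero F] [Field K] [Algebra F K]
    [IsAlgClosure F K]
    (A : Type*) [Ring A] [Algebra F A] [FiniteDimensional F A]
    [IsSemisimpleRing A] (x y : A)
    (h : ∃ u : (K ⊗[F] A)ˣ,
      (u : K ⊗[F] A) * ((1 : K) ⊗ₜ[F] x) = ((1 : K) ⊗ₜ[F] y) * (u : K ⊗[F] A)) :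
    ∃ v : Aˣ, (v : A) * x = y * (v : A) :=
  stmt_4_general F K A x y h
end

section
/- Let F be a field of characteristic 0 and let A be a finite-dimensional F-algebra that is a semisimple ring. Let x ∈ A be an element whose minimal polynomial over F is squarefree. Then the centralizer of x in A (the F-subalgebra {y ∈ A | x*y = y*x}) is itself a semisimple ring. -/
/-!
Over a perfect field, `ad x = L_x - R_x` is semisimple as a difference of commuting semisimple
operators, so `A = ker (ad x) ⊕ range (ad x)`, and `ker (ad x)` is the centralizer `C`. Both
summands are stable under left and right multiplication by `C`, so the projection onto `C` is a
`C`-bimodule retraction `E : A → C`. A semisimple ring is von Neumann regular, and `E` transports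
regularity to `C`: from `n = n a n` we get `n = n E(a) n`. For `n` in the Jacobson radical of `C`,
`1 - n E(a)` is then a unit annihilating `n`, so the radical of the Artinian ring `C` vanishes.
-/

open Polynomial LinearMap

theorem Module.End.IsSemisimple.isCompl_ker_range {K V : Type*} [Field K] [AddCommGroup V]
    [Module K V] [FiniteDimensional K V] {f : Module.End K V} (hf : f.IsSemisimple) :
    IsCompl (ker f) (range f) := by
  rw [Submodule.isCompl_iff_disjoint _ _ (by rw [add_comm, finrank_range_add_finrank_ker]),
    Submodule.disjoint_def]
  rintro _ hv ⟨w, rfl⟩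
  have hw : w ∈ f.genEigenspace 0 (2 : ℕ) := by
    rw [mem_genEigenspace_nat, zero_smul, sub_zero, mem_ker, pow_two, Module.End.mul_apply]
    exact hv
  rw [hf.isFinitelySemisimple.genEigenspace_eq_eigenspace 0 (by decide), eigenspace_zero] at hw
  exact hw

theorem Module.End.isSemisimple_algHom_apply {K V B : Type*} [Field K] [AddCommGroup V]
    [Module K V] [Ring B] [Algebra K B] (φ : B →ₐ[K] Module.End K V) {b : B} {p : K[X]}
    (hp : Squarefree p) (hb : aeval b p = 0) : (φ b).IsSemisimple :=
  isSemisimple_of_squarefree_aeval_eq_zero hp (by rw [aeval_algHom_apply, hb, map_zero])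

theorem Submodule.commute_projection_ker_range {R V : Type*} [Ring R] [AddCommGroup V]
    [Module R V] {f T : Module.End R V} (h : IsCompl (ker f) (range f)) (hfT : Commute f T) :
    Commute ((ker f).projection (range f) h) T := by
  rw [IsIdempotentElem.commute_iff (isIdempotentElem_projection h), range_projection,
    ker_projection, Module.End.mem_invtSubmodule, Module.End.mem_invtSubmodule]
  constructor
  · intro v hv
    rw [Submodule.mem_comap, mem_ker, ← Module.End.mul_apply, hfT.eq, Module.End.mul_apply,
      mem_ker.mp hv, map_zero]
  · rintro _ ⟨w, rfl⟩
    exact ⟨T w, by rw [← Module.End.mul_apply, hfT.eq, Module.End.mul_apply]⟩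

theorem IsSemisimpleRing.exists_mul_mul_eq_self {A : Type*} [Ring A] [IsSemisimpleRing A]
    (a : A) : ∃ b, a * b * a = a := by
  obtain ⟨e, he, hspan⟩ := IsSemisimpleRing.ideal_eq_span_idempotent (Ideal.span {a})
  obtain ⟨r, rfl⟩ := Ideal.mem_span_singleton'.mp (hspan ▸ Ideal.mem_span_singleton_self a)
  obtain ⟨b, hb⟩ := Ideal.mem_span_singleton'.mp (hspan ▸ Ideal.mem_span_singleton_self e)
  exact ⟨b, by rw [mul_assoc _ b, hb, mul_assoc, he.eq]⟩

theorem IsSemisimpleRing.of_retraction {B A : Type*} [Ring B] [Ring A] [IsArtinianRing B]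
    [IsSemisimpleRing A] (i : B →+* A) (E : A → B) (hE_one : E 1 = 1)
    (hE_left : ∀ b a, E (i b * a) = b * E a) (hE_right : ∀ a b, E (a * i b) = E a * b) :
    IsSemisimpleRing B := by
  rw [IsArtinianRing.isSemisimpleRing_iff_jacobson, eq_bot_iff]
  intro n hn
  obtain ⟨a, ha⟩ := exists_mul_mul_eq_self (i n)
  have hn_regular : n * E a * n = n := by
    rw [mul_assoc, ← hE_right, ← hE_left, ← mul_assoc, ha, ← mul_one (i n), hE_left, hE_one,
      mul_one]
  obtain ⟨z, hz⟩ := Ideal.mem_jacobson_iff.mp (Ideal.jacobson_bot (R := B) ▸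
    Ideal.mul_mem_right (E a) _ hn) (-1)
  have hz_inv : z * (1 - n * E a) = 1 := by
    rw [Ideal.mem_bot, sub_eq_zero] at hz
    rw [mul_sub, mul_one, ← hz]
    noncomm_ring
  calc n = z * (1 - n * E a) * n := by rw [hz_inv, one_mul]
    _ = 0 := by rw [mul_assoc, sub_mul, one_mul, hn_regular, sub_self, mul_zero]

section Centralizer

variable {F A : Type*} [Field F] [Ring A] [Algebra F A]

theorem isSemisimple_mulLeft_sub_mulRight [PerfectField F] [FiniteDimensional F A] {x : A}
    (hx : Squarefree (minpoly F x)) : Module.End.IsSemisimple (mulLeft F x - mulRight F x) :=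
  (Module.End.isSemisimple_algHom_apply (Algebra.lmul F A) hx (minpoly.aeval F x)).sub_of_commute
    (commute_mulLeft_right x x)
    -- `mulRight F x` is definitionally the action of `op x : Aᵐᵒᵖ` on `A`
    (Module.End.isSemisimple_algHom_apply (Algebra.lsmul F F A) (b := MulOpposite.op x) hx
      (by rw [aeval_op_apply, minpoly.aeval, MulOpposite.op_zero]))

theorem mem_ker_mulLeft_sub_mulRight_iff {x a : A} :
    a ∈ ker (mulLeft F x - mulRight F x) ↔ a ∈ Subalgebra.centralizer F {x} := by
  simp [Subalgebra.mem_centralizer_iff, sub_eq_zero]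

theorem commute_mulLeft_sub_mulRight_mulLeft {x c : A} (hc : Commute x c) :
    Commute (mulLeft F x - mulRight F x) (mulLeft F c) := by
  ext a
  simp [mul_sub, sub_mul, ← mul_assoc, hc.eq]

theorem commute_mulLeft_sub_mulRight_mulRight {x c : A} (hc : Commute x c) :
    Commute (mulLeft F x - mulRight F x) (mulRight F c) := by
  ext a
  simp [mul_sub, sub_mul, mul_assoc, hc.eq]

theorem exists_retraction_centralizer_singleton [PerfectField F] [FiniteDimensional F A] {x : A}
    (hx : Squarefree (minpoly F x)) :
    ∃ E : A → Subalgebra.centralizer F {x}, E 1 = 1 ∧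
      (∀ (c : Subalgebra.centralizer F {x}) a, E (c * a) = c * E a) ∧
      ∀ a (c : Subalgebra.centralizer F {x}), E (a * c) = E a * c := by
  have hcompl := (isSemisimple_mulLeft_sub_mulRight hx).isCompl_ker_range
  set P := Submodule.projection _ _ hcompl
  have hP_mem (a : A) : P a ∈ Subalgebra.centralizer F {x} :=
    mem_ker_mulLeft_sub_mulRight_iff.mp (Submodule.projection_apply_mem hcompl a)
  have hx_comm (c : Subalgebra.centralizer F {x}) : Commute x c :=
    (Subalgebra.mem_centralizer_iff F).mp c.2 x rfl
  refine ⟨fun a ↦ ⟨P a, hP_mem a⟩, ?_, fun c a ↦ ?_, fun a c ↦ ?_⟩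
  · exact Subtype.ext (Submodule.projection_apply_of_mem_left hcompl
      (mem_ker_mulLeft_sub_mulRight_iff.mpr (Subalgebra.one_mem _)))
  · exact Subtype.ext (LinearMap.congr_fun (Submodule.commute_projection_ker_range hcompl
      (commute_mulLeft_sub_mulRight_mulLeft (hx_comm c))).eq a)
  · exact Subtype.ext (LinearMap.congr_fun (Submodule.commute_projection_ker_range hcompl
      (commute_mulLeft_sub_mulRight_mulRight (hx_comm c))).eq a)

end Centralizer

/-- The centralizer of a semisimple element (squarefree minimal polynomial)
in a finite-dimensional semisimple algebra over a field of characteristic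
zero is again a semisimple ring. -/
theorem stmt_5 (F : Type*) [Field F] [CharZero F]
    (A : Type*) [Ring A] [Algebra F A] [FiniteDimensional F A]
    [IsSemisimpleRing A] (x : A)
    (hx : Squarefree (minpoly F x)) :
    IsSemisimpleRing (Subalgebra.centralizer F ({x} : Set A)) := by
  obtain ⟨E, hE_one, hE_left, hE_right⟩ := exists_retraction_centralizer_singleton hx
  have : IsArtinianRing (Subalgebra.centralizer F ({x} : Set A)) := .of_finite F _
  exact IsSemisimpleRing.of_retraction (Subalgebra.val _).toRingHom E hE_one hE_left hE_right
end

section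
/- Let p be a prime, let r₁, r₂ be natural numbers, and let V be a matrix with r₁ rows and r₂ + r₁ columns with entries in the ring ℤ_p of p-adic integers. Then there exists a matrix k of size (r₂ + r₁) × (r₂ + r₁) over ℤ_p that is a unit of the matrix ring (i.e. invertible over ℤ_p) such that the first r₂ columns of V * k are zero: for every row index i and every column index j with j < r₂, (V * k) i j = 0. -/
/-!
Over a principal ideal domain `R`, the kernel `K` of `V : R^{m+r} → R^r` is saturated, as the
target is torsion-free, and has rank at least `m` by rank–nullity. A Smith normal form basis
`(b, a)` adapted to `K` has `a i • b (f i) ∈ K` with `a i ≠ 0`, so saturation puts at least `m`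
vectors of the basis `b` of `R^{m+r}` into `K`. Permuting `b` so that these come first and taking
them as the columns of `k` gives an invertible matrix with `V * k` vanishing on the first `m`
columns.
-/

open Matrix Module Finset

namespace Module.Basis.SmithNormalForm

variable {R M N ι : Type*} [CommRing R] [IsDomain R] [AddCommGroup M] [Module R M]
  [AddCommGroup N] [Module R N] {n : ℕ} {f : M →ₗ[R] N}

theorem bM_f_mem_ker [IsTorsionFree R N] (snf : Basis.SmithNormalForm (LinearMap.ker f) ι n)
    (i : Fin n) : snf.bM (snf.f i) ∈ LinearMap.ker f := by
  have ha : snf.a i ≠ 0 := by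
    intro h
    apply snf.bN.ne_zero i
    ext1
    rw [snf.snf i, h, zero_smul, ZeroMemClass.coe_zero]
  have hsmul : snf.a i • f (snf.bM (snf.f i)) = 0 := by
    rw [← map_smul, ← snf.snf i]
    exact (snf.bN i).2
  exact (smul_eq_zero.mp hsmul).resolve_left ha

theorem finrank_le_finrank_add [Module.Finite R M] [Module.Finite R N]
    (snf : Basis.SmithNormalForm (LinearMap.ker f) ι n) : finrank R M ≤ finrank R N + n := by
  have hnullity := (LinearMap.ker f).finrank_quotient_add_finrank
  rw [f.quotKerEquivRange.finrank_eq, finrank_eq_card_basis snf.bN, Fintype.card_fin]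
    at hnullity
  have hrange := (LinearMap.range f).finrank_le
  omega

end Module.Basis.SmithNormalForm

theorem Matrix.exists_isUnit_forall_mem_mul_apply_eq_zero {R ι κ : Type*} [CommRing R]
    [IsDomain R] [IsPrincipalIdealRing R] [Fintype ι] [Fintype κ] [DecidableEq κ] (V : Matrix ι κ R)
    (s : Finset κ) (hs : #s + Fintype.card ι ≤ Fintype.card κ) :
    ∃ k : Matrix κ κ R, IsUnit k ∧ ∀ i, ∀ j ∈ s, (V * k) i j = 0 := by
  obtain ⟨n, snf⟩ := (LinearMap.ker V.mulVecLin).smithNormalForm (Pi.basisFun R κ)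
  have hsn : #s ≤ n := by
    have hrank := snf.finrank_le_finrank_add
    simp only [finrank_fintype_fun_eq_card] at hrank
    omega
  obtain ⟨σ, hσ⟩ := Equiv.Perm.exists_extending_pair (fun j : s ↦ (j : κ))
    (fun j ↦ snf.f (Fin.castLE hsn (s.equivFin j))) Subtype.val_injective
    (snf.f.injective.comp ((Fin.castLE_injective hsn).comp s.equivFin.injective))
  let b := snf.bM.reindex σ.symm
  have hb : ∀ j ∈ s, V *ᵥ b j = 0 := fun j hj ↦ by
    simpa [b, hσ ⟨j, hj⟩] using snf.bM_f_mem_ker _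
  refine ⟨(Pi.basisFun R κ).toMatrix b,
    @isUnit_of_invertible _ _ _ ((Pi.basisFun R κ).invertibleToMatrix b), fun i j hj ↦ ?_⟩
  have hcol : (fun l ↦ (Pi.basisFun R κ).toMatrix b l j) = b j := by
    ext l
    simp [Basis.toMatrix_apply]
  rw [mul_apply', ← mulVec, hcol, hb j hj, Pi.zero_apply]

/-- Non-archimedean matrix lemma (case `O_D = ℤ_p`): for any `r₁ × (r₂ + r₁)`
matrix `V` over `ℤ_[p]`, there is a matrix `k` invertible over `ℤ_[p]` such
that the first `r₂` columns of `V * k` vanish. -/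
theorem stmt_9 (p : ℕ) [Fact p.Prime] (r₁ r₂ : ℕ)
    (V : Matrix (Fin r₁) (Fin (r₂ + r₁)) ℤ_[p]) :
    ∃ k : Matrix (Fin (r₂ + r₁)) (Fin (r₂ + r₁)) ℤ_[p],
      IsUnit k ∧
      ∀ (i : Fin r₁) (j : Fin (r₂ + r₁)), (j : ℕ) < r₂ → (V * k) i j = 0 := by
  obtain ⟨k, hk, hVk⟩ := V.exists_isUnit_forall_mem_mul_apply_eq_zero {j | (j : ℕ) < r₂}
    (by simp [Fin.card_filter_val_lt])
  exact ⟨k, hk, fun i j hj ↦ hVk i j (by simpa using hj)⟩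
end

section
/- Let ℍ be the algebra of real quaternions (with its conjugation as star operation), let V be a left ℍ-module that is finite and free, and let B : V → V → ℍ be a map satisfying: (a) B (v₁ + v₂) w = B v₁ w + B v₂ w and B (d • v) w = d * B v w for all v, v₁, v₂, w ∈ V and d ∈ ℍ; (b) B v w = star (B w v) for all v, w; (c) for every v there exists a real number r ≥ 0 with B v v = (r : ℍ) (the image of r under ℝ → ℍ); (d) B v v = 0 implies v = 0. Then there exist a natural number n and a basis b : Fin n → V of V over ℍ that is orthonormal for B: B (b i) (b j) = 1 if i = j and B (b i) (b j) = 0 if i ≠ j. -/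
/-!
Gram–Schmidt. A nonzero vector `v` has `B v v = r` with `r > 0` real; real scalars are central
in `ℍ`, so `e = r^(-1/2) • v` has `B e e = 1`. The orthogonal complement of `e` is the kernel of
the `ℍ`-linear functional `w ↦ B w e`, a complement of `ℍ e` of smaller dimension, and the
restriction of `B` to it is again a scalar product; induct on the dimension.
-/

open Quaternion Module

namespace Module.Basis

variable {R M : Type*} [Ring R] [AddCommGroup M] [Module R M]

noncomputable def mkFinConsKer {n : ℕ} (φ : M →ₗ[R] R) (y : M) (hy : φ y = 1)
    (b : Basis (Fin n) R (LinearMap.ker φ)) : Basis (Fin (n + 1)) R M :=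
  mkFinCons y b
    (fun c x hx hc => by simpa [hy, LinearMap.mem_ker.mp hx] using congr_arg φ hc)
    (fun z => ⟨-φ z, by simp [hy]⟩)

theorem coe_mkFinConsKer {n : ℕ} (φ : M →ₗ[R] R) (y : M) (hy : φ y = 1)
    (b : Basis (Fin n) R (LinearMap.ker φ)) :
    (mkFinConsKer φ y hy b : Fin (n + 1) → M) = Fin.cons y ((↑) ∘ b) :=
  coe_mkFinCons _ _ _ _

end Module.Basis

structure QuaternionicScalarProduct (V : Type*) [AddCommGroup V] [Module ℍ[ℝ] V] where
  toFun : V → V → ℍ[ℝ]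
  map_add_left : ∀ v₁ v₂ w : V, toFun (v₁ + v₂) w = toFun v₁ w + toFun v₂ w
  map_smul_left : ∀ (d : ℍ[ℝ]) (v w : V), toFun (d • v) w = d * toFun v w
  star_swap : ∀ v w : V, toFun v w = star (toFun w v)
  exists_nonneg_self : ∀ v : V, ∃ r : ℝ, 0 ≤ r ∧ toFun v v = (r : ℍ[ℝ])
  eq_zero_of_self : ∀ v : V, toFun v v = 0 → v = 0

namespace QuaternionicScalarProduct

variable {V : Type*} [AddCommGroup V] [Module ℍ[ℝ] V] (B : QuaternionicScalarProduct V)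

instance : CoeFun (QuaternionicScalarProduct V) (fun _ => V → V → ℍ[ℝ]) := ⟨toFun⟩

def Orthonormal {ι : Type*} (b : ι → V) : Prop :=
  (∀ i, B (b i) (b i) = 1) ∧ ∀ i j, i ≠ j → B (b i) (b j) = 0

theorem map_smul_right (d : ℍ[ℝ]) (v w : V) : B v (d • w) = B v w * star d := by
  rw [B.star_swap, B.map_smul_left, star_mul, ← B.star_swap]

theorem exists_self_eq_one [Nontrivial V] : ∃ e : V, B e e = 1 := by
  obtain ⟨v, hv⟩ := exists_ne (0 : V)
  obtain ⟨r, hr, hvv⟩ := B.exists_nonneg_self v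
  have hr : 0 < r := hr.lt_of_ne' fun h => hv (B.eq_zero_of_self v (by simp [hvv, h]))
  refine ⟨(((√r)⁻¹ : ℝ) : ℍ[ℝ]) • v, ?_⟩
  have hsqrt : (√r)⁻¹ * r * (√r)⁻¹ = 1 := by
    field_simp
    exact (Real.sq_sqrt hr.le).symm
  rw [B.map_smul_left, B.map_smul_right, hvv, star_coe, ← mul_assoc, ← coe_mul, ← coe_mul,
    hsqrt, coe_one]

def leftFunctional (e : V) : V →ₗ[ℍ[ℝ]] ℍ[ℝ] where
  toFun w := B w e
  map_add' v w := B.map_add_left v w e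
  map_smul' d w := B.map_smul_left d w e

def restrict (W : Submodule ℍ[ℝ] V) : QuaternionicScalarProduct W where
  toFun x y := B x y
  map_add_left x y z := B.map_add_left x y z
  map_smul_left d x y := B.map_smul_left d x y
  star_swap x y := B.star_swap x y
  exists_nonneg_self x := B.exists_nonneg_self x
  eq_zero_of_self x hx := Subtype.ext (B.eq_zero_of_self x hx)

theorem orthonormal_finCons {n : ℕ} {e : V} (he : B e e = 1)
    {c : Fin n → LinearMap.ker (B.leftFunctional e)}
    (hc : (B.restrict (LinearMap.ker (B.leftFunctional e))).Orthonormal c) :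
    B.Orthonormal (Fin.cons e ((↑) ∘ c) : Fin (n + 1) → V) := by
  have hce (i : Fin n) : B (c i) e = 0 := (c i).2
  have hec (i : Fin n) : B e (c i) = 0 := by rw [B.star_swap, hce, star_zero]
  refine ⟨Fin.cases he hc.1, fun i j hij => ?_⟩
  cases i using Fin.cases <;> cases j using Fin.cases
  · exact absurd rfl hij
  · exact hec _
  · exact hce _
  · exact hc.2 _ _ (fun h => hij (congrArg Fin.succ h))

end QuaternionicScalarProduct

theorem QuaternionicScalarProduct.exists_orthonormal_basis
    (V : Type*) [AddCommGroup V] [Module ℍ[ℝ] V] [Module.Finite ℍ[ℝ] V]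
    (B : QuaternionicScalarProduct V) :
    ∃ (n : ℕ) (b : Basis (Fin n) ℍ[ℝ] V), B.Orthonormal b := by
  induction hn : finrank ℍ[ℝ] V using Nat.strong_induction_on generalizing V with
  | _ n ih =>
    rcases subsingleton_or_nontrivial V with hV | hV
    · exact ⟨0, Basis.empty V, fun i => i.elim0, fun i => i.elim0⟩
    obtain ⟨e, he⟩ := B.exists_self_eq_one
    have hφe : B.leftFunctional e e = 1 := he
    set W := LinearMap.ker (B.leftFunctional e)
    have heW : e ∉ W := fun h => one_ne_zero (hφe.symm.trans h)
    have hW : W ≠ ⊤ := fun h => heW (h ▸ Submodule.mem_top)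
    obtain ⟨m, c, hc⟩ := ih _ (hn ▸ Submodule.finrank_lt hW) W (B.restrict W) rfl
    refine ⟨m + 1, Basis.mkFinConsKer _ e hφe c, ?_⟩
    rw [Basis.coe_mkFinConsKer]
    exact B.orthonormal_finCons he hc

theorem stmt_10_general (V : Type*) [AddCommGroup V] [Module ℍ[ℝ] V]
    [Module.Finite ℍ[ℝ] V]
    (B : V → V → ℍ[ℝ])
    (hadd : ∀ v₁ v₂ w : V, B (v₁ + v₂) w = B v₁ w + B v₂ w)
    (hsmul : ∀ (d : ℍ[ℝ]) (v w : V), B (d • v) w = d * B v w)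
    (hsymm : ∀ v w : V, B v w = star (B w v))
    (hpos : ∀ v : V, ∃ r : ℝ, 0 ≤ r ∧ B v v = (r : ℍ[ℝ]))
    (hdef : ∀ v : V, B v v = 0 → v = 0) :
    ∃ (n : ℕ) (b : Module.Basis (Fin n) ℍ[ℝ] V),
      (∀ i, B (b i) (b i) = 1) ∧ ∀ i j, i ≠ j → B (b i) (b j) = 0 :=
  QuaternionicScalarProduct.exists_orthonormal_basis V ⟨B, hadd, hsmul, hsymm, hpos, hdef⟩

/-- Every finite free left module over the real quaternions equipped with a
quaternionic scalar product admits an orthonormal basis. -/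
theorem stmt_10 (V : Type*) [AddCommGroup V] [Module ℍ[ℝ] V]
    [Module.Finite ℍ[ℝ] V] [Module.Free ℍ[ℝ] V]
    (B : V → V → ℍ[ℝ])
    (hadd : ∀ v₁ v₂ w : V, B (v₁ + v₂) w = B v₁ w + B v₂ w)
    (hsmul : ∀ (d : ℍ[ℝ]) (v w : V), B (d • v) w = d * B v w)
    (hsymm : ∀ v w : V, B v w = star (B w v))
    (hpos : ∀ v : V, ∃ r : ℝ, 0 ≤ r ∧ B v v = (r : ℍ[ℝ]))
    (hdef : ∀ v : V, B v v = 0 → v = 0) :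
    ∃ (n : ℕ) (b : Module.Basis (Fin n) ℍ[ℝ] V),
      (∀ i, B (b i) (b i) = 1) ∧ ∀ i j, i ≠ j → B (b i) (b j) = 0 :=
  stmt_10_general V B hadd hsmul hsymm hpos hdef
end

section
/- Let ℍ be the algebra of real quaternions (with its conjugation as star operation), let V be a left ℍ-module that is finite and free, let B : V → V → ℍ satisfy: (a) B (v₁ + v₂) w = B v₁ w + B v₂ w and B (d • v) w = d * B v w; (b) B v w = star (B w v); (c) for every v there is a real r ≥ 0 with B v v = (r : ℍ); (d) B v v = 0 implies v = 0. Let E be an ℍ-submodule of V and define E^⊥ = {v ∈ V | B e v = 0 for all e ∈ E}, which is an ℍ-submodule. Then E and E^⊥ are complementary: E ⊓ E^⊥ = ⊥ and E ⊔ E^⊥ = ⊤, i.e. V = E ⊕ E^⊥. -/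
open Quaternion

/-- For a submodule `E` of a finite free left module over the real quaternions
with a quaternionic scalar product, the orthogonal complement
`E^⊥ = {v | ∀ e ∈ E, B e v = 0}` is a submodule complementary to `E`. -/
theorem stmt_11 (V : Type*) [AddCommGroup V] [Module ℍ[ℝ] V]
    [Module.Finite ℍ[ℝ] V] [Module.Free ℍ[ℝ] V]
    (B : V → V → ℍ[ℝ])
    (hadd : ∀ v₁ v₂ w : V, B (v₁ + v₂) w = B v₁ w + B v₂ w)
    (hsmul : ∀ (d : ℍ[ℝ]) (v w : V), B (d • v) w = d * B v w)
    (hsymm : ∀ v w : V, B v w = star (B w v))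
    (hpos : ∀ v : V, ∃ r : ℝ, 0 ≤ r ∧ B v v = (r : ℍ[ℝ]))
    (hdef : ∀ v : V, B v v = 0 → v = 0)
    (E : Submodule ℍ[ℝ] V) :
    ∃ Ep : Submodule ℍ[ℝ] V,
      (Ep : Set V) = {v : V | ∀ e ∈ E, B e v = 0} ∧
      E ⊓ Ep = ⊥ ∧ E ⊔ Ep = ⊤ := by
  -- basic linearity facts
  have hzl : ∀ w : V, B 0 w = 0 := by
    intro w
    have := hadd 0 0 w
    simpa using this.symm
  have hzr : ∀ v : V, B v 0 = 0 := by
    intro v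
    rw [hsymm, hzl]; simp
  have haddr : ∀ u v w : V, B u (v + w) = B u v + B u w := by
    intro u v w
    rw [hsymm, hadd, hsymm v u, hsymm w u]
    simp
  have hsmulr : ∀ (d : ℍ[ℝ]) (u v : V), B u (d • v) = B u v * star d := by
    intro d u v
    rw [hsymm, hsmul, star_mul, ← hsymm]
  have hsubr : ∀ u v w : V, B u (v - w) = B u v - B u w := by
    intro u v w
    rw [eq_sub_iff_add_eq, ← haddr]
    simp
  have hsubl : ∀ u v w : V, B (u - v) w = B u w - B v w := by
    intro u v w
    rw [eq_sub_iff_add_eq, ← hadd]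
    simp
  -- key projection lemma by induction on rank
  have key : ∀ (n : ℕ) (F : Submodule ℍ[ℝ] V), Module.finrank ℍ[ℝ] F = n →
      ∀ v : V, ∃ e ∈ F, ∀ f ∈ F, B f (v - e) = 0 := by
    intro n
    induction n using Nat.strong_induction_on with
    | _ n ih =>
      intro F hF v
      by_cases hbot : F = ⊥
      · refine ⟨0, zero_mem _, ?_⟩
        intro f hf
        rw [hbot] at hf
        simp only [Submodule.mem_bot] at hf
        subst hf
        exact hzl _
      · obtain ⟨e₀, he₀F, he₀⟩ := Submodule.exists_mem_ne_zero_of_ne_bot hbot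
        obtain ⟨r, hr0, hrB⟩ := hpos e₀
        have hrne : r ≠ 0 := by
          intro h
          apply he₀
          apply hdef
          rw [hrB, h]; simp
        -- projection onto e₀
        set rinv : ℍ[ℝ] := ((r⁻¹ : ℝ) : ℍ[ℝ]) with hrinv
        have hproj : ∀ u : V, B e₀ (u - (star (B e₀ u) * rinv) • e₀) = 0 := by
          intro u
          rw [hsubr, hsmulr, hrB, star_mul, star_star]
          have : star rinv = rinv := by
            simp [hrinv]
          rw [this]
          have : (r : ℍ[ℝ]) * (rinv * B e₀ u) = B e₀ u := by
            rw [← mul_assoc, hrinv]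
            norm_cast
            rw [mul_inv_cancel₀ hrne]
            simp
          rw [this, sub_self]
        -- the perp of e₀
        let P : Submodule ℍ[ℝ] V :=
          { carrier := {w | B e₀ w = 0}
            add_mem' := by
              intro a b ha hb
              simp only [Set.mem_setOf_eq] at *
              rw [haddr, ha, hb, add_zero]
            zero_mem' := by
              simp only [Set.mem_setOf_eq]
              exact hzr _
            smul_mem' := by
              intro c a ha
              simp only [Set.mem_setOf_eq] at *
              rw [hsmulr, ha, zero_mul] }
        have hPmem : ∀ w : V, w ∈ P ↔ B e₀ w = 0 := fun w => Iff.rfl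
        have he₀P : e₀ ∉ P := by
          rw [hPmem, hrB]
          intro h
          exact hrne (by simpa using congrArg QuaternionAlgebra.re h)
        have hlt : F ⊓ P < F := by
          refine lt_of_le_of_ne inf_le_left ?_
          intro h
          have : e₀ ∈ F ⊓ P := by rw [h]; exact he₀F
          exact he₀P (Submodule.mem_inf.mp this).2
        have hrank : Module.finrank ℍ[ℝ] (F ⊓ P : Submodule ℍ[ℝ] V) < n := by
          rw [← hF]
          exact Submodule.finrank_lt_finrank_of_lt hlt
        -- project v onto e₀
        set d : ℍ[ℝ] := star (B e₀ v) * rinv with hd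
        set v₁ : V := v - d • e₀ with hv₁
        obtain ⟨e', he'FP, he'⟩ := ih _ hrank (F ⊓ P) rfl v₁
        refine ⟨d • e₀ + e', add_mem (Submodule.smul_mem _ _ he₀F) ((Submodule.mem_inf.mp he'FP).1), ?_⟩
        intro f hf
        -- decompose f
        set c : ℍ[ℝ] := star (B e₀ f) * rinv with hc
        have hf' : f - c • e₀ ∈ F ⊓ P :=
          Submodule.mem_inf.mpr
            ⟨sub_mem hf (Submodule.smul_mem _ _ he₀F), (hPmem _).mpr (hproj f)⟩
        have hBe₀ : B e₀ (v - (d • e₀ + e')) = 0 := by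
          have h1 : v - (d • e₀ + e') = v₁ - e' := by
            rw [hv₁]; abel
          rw [h1, hsubr, hproj v]
          have : B e₀ e' = 0 := (hPmem e').mp ((Submodule.mem_inf.mp he'FP).2)
          rw [this, sub_zero]
        have hfdec : f = c • e₀ + (f - c • e₀) := by abel
        calc B f (v - (d • e₀ + e'))
            = B (c • e₀ + (f - c • e₀)) (v - (d • e₀ + e')) := by rw [← hfdec]
          _ = c * B e₀ (v - (d • e₀ + e')) + B (f - c • e₀) (v - (d • e₀ + e')) := by
              rw [hadd, hsmul]
          _ = 0 := by
              rw [hBe₀, mul_zero, zero_add]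
              have h1 : v - (d • e₀ + e') = v₁ - e' := by rw [hv₁]; abel
              rw [h1]
              exact he' _ hf'
  -- the orthogonal complement
  let Ep : Submodule ℍ[ℝ] V :=
    { carrier := {v | ∀ e ∈ E, B e v = 0}
      add_mem' := by
        intro a b ha hb e he
        rw [haddr, ha e he, hb e he, add_zero]
      zero_mem' := fun e _ => hzr e
      smul_mem' := by
        intro c a ha e he
        rw [hsmulr, ha e he, zero_mul] }
  refine ⟨Ep, rfl, ?_, ?_⟩
  · rw [eq_bot_iff]
    intro v hv
    simp only [Submodule.mem_inf] at hv
    have : B v v = 0 := hv.2 v hv.1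
    simpa using hdef v this
  · rw [eq_top_iff]
    intro v _
    obtain ⟨e, heE, he⟩ := key (Module.finrank ℍ[ℝ] E) E rfl v
    have : v = e + (v - e) := by abel
    rw [this]
    exact Submodule.add_mem_sup heE (fun f hf => he f hf)
end

section
/- Let ℍ be the algebra of real quaternions with its conjugation as star operation, let r₁, r₂ be natural numbers, and let V be a matrix with r₁ rows and r₂ + r₁ columns with entries in ℍ. Then there exists a matrix k of size (r₂ + r₁) × (r₂ + r₁) over ℍ belonging to the unitary group of the matrix star-ring (i.e. k * star k = 1 = star k * k, where star is the conjugate transpose) such that the first r₂ columns of V * k are zero: for every row index i and every column index j with j < r₂, (V * k) i j = 0. -/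
/-! The columns of `k` are chosen greedily: first `r₂` orthonormal vectors in the kernel of `V`,
then `r₁` more orthonormal to those. A unit vector in the kernel of a quaternionic matrix with
fewer rows than columns exists by rank–nullity for `v ↦ v ᵥ* Aᴴ` (a left `ℍ`-linear map), followed
by conjugation and normalization. The resulting `k` satisfies `kᴴ * k = 1`, and `k * kᴴ = 1`
follows because matrix rings over a division ring are Dedekind-finite. -/

open Quaternion Matrix

theorem Matrix.exists_ne_zero_vecMul_eq_zero {m n D : Type*} [Fintype m] [Fintype n]
    [DivisionRing D] (A : Matrix m n D) (h : Fintype.card n < Fintype.card m) :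
    ∃ v ≠ 0, v ᵥ* A = 0 := by
  classical
  have hker := LinearMap.ker_ne_bot_of_finrank_lt (f := Matrix.toLinearMapRight' A)
    (by simpa only [Module.finrank_pi] using h)
  obtain ⟨v, hv, hv0⟩ := (Submodule.ne_bot_iff _).mp hker
  exact ⟨v, hv0, hv⟩

namespace Quaternion

variable {n : Type*} [Fintype n]

theorem star_dotProduct_self (v : n → ℍ[ℝ]) :
    star v ⬝ᵥ v = ((∑ j, normSq (v j) : ℝ) : ℍ[ℝ]) := by
  simp only [dotProduct, Pi.star_apply, star_mul_self, ← algebraMap_def, map_sum]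

theorem exists_smul_star_dotProduct_self_eq_one {v : n → ℍ[ℝ]} (hv : v ≠ 0) :
    ∃ c : ℝ, star (c • v) ⬝ᵥ (c • v) = 1 := by
  set t := ∑ j, normSq (v j)
  have ht : 0 < t := by
    obtain ⟨j, hj⟩ := Function.ne_iff.mp hv
    exact Finset.sum_pos' (fun _ _ => normSq_nonneg)
      ⟨j, Finset.mem_univ _, normSq_nonneg.lt_of_ne' (normSq_eq_zero.not.mpr hj)⟩
  refine ⟨(√t)⁻¹, ?_⟩
  have hstar : star ((√t)⁻¹ • v) = (√t)⁻¹ • star v := funext fun j => star_smul _ (v j)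
  rw [hstar, smul_dotProduct, dotProduct_smul, smul_smul, star_dotProduct_self,
    ← mul_inv, Real.mul_self_sqrt ht.le, smul_coe, inv_mul_cancel₀ ht.ne', coe_one]

theorem exists_star_dotProduct_self_eq_one_mulVec_eq_zero {m : Type*} [Fintype m]
    (A : Matrix m n ℍ[ℝ]) (h : Fintype.card m < Fintype.card n) :
    ∃ v, star v ⬝ᵥ v = 1 ∧ A *ᵥ v = 0 := by
  obtain ⟨w, hw, hwA⟩ := Aᴴ.exists_ne_zero_vecMul_eq_zero h
  have hA : A *ᵥ star w = 0 := by
    rw [← conjTranspose_conjTranspose A, ← star_vecMul, hwA, star_zero]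
  obtain ⟨c, hc⟩ := exists_smul_star_dotProduct_self_eq_one (star_ne_zero.mpr hw)
  exact ⟨c • star w, hc, by rw [mulVec_smul, hA, smul_zero]⟩

end Quaternion

namespace Matrix

variable {m n n₁ n₂ R : Type*} [Fintype m] [Semiring R] [StarRing R]

theorem conjTranspose_mul_self_fromCols_eq_one [DecidableEq n₁] [DecidableEq n₂]
    {A : Matrix m n₁ R} {B : Matrix m n₂ R} (hA : Aᴴ * A = 1) (hB : Bᴴ * B = 1)
    (hAB : Aᴴ * B = 0) : (fromCols A B)ᴴ * fromCols A B = 1 := by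
  have hBA : Bᴴ * A = 0 := by
    rw [← conjTranspose_conjTranspose A, ← conjTranspose_mul, hAB, conjTranspose_zero]
  rw [conjTranspose_fromCols_eq_fromRows_conjTranspose, fromRows_mul_fromCols, hA, hB, hAB, hBA,
    fromBlocks_one]

theorem conjTranspose_mul_self_submatrix_id [Fintype n] (A : Matrix m n R) (e : n₁ ≃ n) :
    (A.submatrix id e)ᴴ * A.submatrix id e = (Aᴴ * A).submatrix e e := by
  rw [conjTranspose_submatrix]
  exact submatrix_mul_equiv Aᴴ A e (Equiv.refl m) e

theorem conjTranspose_mul_self_replicateCol_eq_one (ι : Type*) [Unique ι] [DecidableEq ι]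
    {v : m → R} (hv : star v ⬝ᵥ v = 1) : (replicateCol ι v)ᴴ * replicateCol ι v = 1 := by
  ext i j
  rw [conjTranspose_replicateCol, replicateRow_mul_replicateCol_apply, hv, Subsingleton.elim i j,
    one_apply_eq]

end Matrix

theorem Quaternion.exists_conjTranspose_mul_self_eq_one_and_mul_eq_zero {κ n : Type*}
    [Fintype κ] [Fintype n] (B : Matrix κ n ℍ[ℝ]) (r : ℕ)
    (hr : Fintype.card κ + r ≤ Fintype.card n) :
    ∃ k : Matrix n (Fin r) ℍ[ℝ], kᴴ * k = 1 ∧ B * k = 0 := by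
  induction r with
  | zero => exact ⟨0, Subsingleton.elim _ _, Matrix.mul_zero B⟩
  | succ r ih =>
    obtain ⟨k, hk, hBk⟩ := ih (by omega)
    obtain ⟨y, hy, hBky⟩ := exists_star_dotProduct_self_eq_one_mulVec_eq_zero (fromRows B kᴴ)
      (by rw [Fintype.card_sum, Fintype.card_fin]; omega)
    rw [fromRows_mulVec, ← Sum.elim_zero_zero, Sum.elim_eq_iff] at hBky
    obtain ⟨hBy, hky⟩ := hBky
    let Y := replicateCol (Fin 1) y
    have hY : Yᴴ * Y = 1 := conjTranspose_mul_self_replicateCol_eq_one _ hy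
    have hkY : kᴴ * Y = 0 := by rw [← replicateCol_mulVec, hky, replicateCol_zero]
    have hBY : B * Y = 0 := by rw [← replicateCol_mulVec, hBy, replicateCol_zero]
    refine ⟨(fromCols k Y).submatrix id finSumFinEquiv.symm, ?_, ?_⟩
    · rw [conjTranspose_mul_self_submatrix_id,
        conjTranspose_mul_self_fromCols_eq_one hk hY hkY, submatrix_one_equiv]
    · have hBkY : B * fromCols k Y = 0 := by rw [mul_fromCols, hBk, hBY, fromCols_zero]
      exact Matrix.ext fun i j => congr_fun (congr_fun hBkY i) (finSumFinEquiv.symm j)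

/-- Archimedean matrix lemma (case `D = ℍ`): for any `r₁ × (r₂ + r₁)` matrix
`V` over the real quaternions, there is a unitary matrix `k` (for the
conjugate-transpose star) such that the first `r₂` columns of `V * k`
vanish. -/
theorem stmt_12 (r₁ r₂ : ℕ) (V : Matrix (Fin r₁) (Fin (r₂ + r₁)) ℍ[ℝ]) :
    ∃ k : Matrix (Fin (r₂ + r₁)) (Fin (r₂ + r₁)) ℍ[ℝ],
      k * kᴴ = 1 ∧ kᴴ * k = 1 ∧
      ∀ (i : Fin r₁) (j : Fin (r₂ + r₁)), (j : ℕ) < r₂ → (V * k) i j = 0 := by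
  obtain ⟨k₁, hk₁, hVk₁⟩ :=
    exists_conjTranspose_mul_self_eq_one_and_mul_eq_zero V r₂ (by simp [add_comm])
  obtain ⟨k₂, hk₂, hk₁k₂⟩ :=
    exists_conjTranspose_mul_self_eq_one_and_mul_eq_zero k₁ᴴ r₁ (by simp)
  set k := (fromCols k₁ k₂).submatrix id finSumFinEquiv.symm
  have hk : kᴴ * k = 1 := by
    rw [conjTranspose_mul_self_submatrix_id,
      conjTranspose_mul_self_fromCols_eq_one hk₁ hk₂ hk₁k₂, submatrix_one_equiv]
  refine ⟨k, mul_eq_one_comm.mp hk, hk, fun i j hj => ?_⟩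
  change (V * fromCols k₁ k₂) i (finSumFinEquiv.symm j) = 0
  rw [show j = Fin.castAdd r₁ ⟨j, hj⟩ from rfl, finSumFinEquiv_symm_apply_castAdd, mul_fromCols,
    fromCols_apply_inl, hVk₁, Matrix.zero_apply]
end
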